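/- arXiv:2310.06288 — 7 statements merged into one kernel-verified Lean document; each statement's English description precedes it below -/
import Mathlib

section
/- Let (x_1,...,x_m) be a vector of real numbers with x_1+...+x_m = 0 such that no cyclically consecutive sum x_{i+1}+x_{i+2}+...+x_j with fewer than m terms vanishes (indices read modulo m). Then for each r in {0,1,...,m-1}, exactly one of the m cyclic shifts of (x_1,...,x_m) has exactly r positive partial sums. -/
/-!
Let `S n = x₀ + ⋯ + x_{n-1}`, which is `m`-periodic in `n` because the total sum is zero. The
`k`-th partial sum of the shift starting at `i` is `S (i + k) - S i`, so the number of positive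
partial sums of that shift is the number of `j` with `S i < S j`. The hypothesis on cyclic sums
says exactly that `S₀, …, S_{m-1}` are pairwise distinct, and for distinct values the rank
`i ↦ #{j | S i < S j}` is a bijection onto `{0, …, m - 1}`.
-/

open Finset Function Fin.NatCast

section Rank

variable {α β : Type*} [Fintype α] [LinearOrder β] {f : α → β}

lemma card_filter_lt_lt_card (i : α) : #{k | f i < f k} < Fintype.card α :=
  card_lt_card <| filter_ssubset.mpr ⟨i, mem_univ i, lt_irrefl _⟩

lemma card_filter_lt_lt_of_lt {i j : α} (h : f i < f j) :
    #{k | f j < f k} < #{k | f i < f k} := by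
  refine card_lt_card ⟨fun k hk => ?_, fun hsub => ?_⟩
  · simp only [mem_filter, mem_univ, true_and] at hk ⊢
    exact h.trans hk
  · simpa using hsub (mem_filter.mpr ⟨mem_univ j, h⟩)

lemma existsUnique_card_filter_lt_eq (hf : Injective f) {r : ℕ} (hr : r < Fintype.card α) :
    ∃! i, #{k | f i < f k} = r := by
  let rank : α → Fin (Fintype.card α) := fun i => ⟨_, card_filter_lt_lt_card (f := f) i⟩
  have rank_injective : Injective rank := by
    intro i j hij
    have hij : #{k | f i < f k} = #{k | f j < f k} := congrArg Fin.val hij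
    rcases lt_trichotomy (f i) (f j) with h | h | h
    · exact absurd hij (card_filter_lt_lt_of_lt h).ne'
    · exact hf h
    · exact absurd hij (card_filter_lt_lt_of_lt h).ne
  have rank_bijective : Bijective rank :=
    (Fintype.bijective_iff_injective_and_card rank).mpr
      ⟨rank_injective, (Fintype.card_fin _).symm⟩
  obtain ⟨i, hi, huniq⟩ := rank_bijective.existsUnique ⟨r, hr⟩
  exact ⟨i, congrArg Fin.val hi, fun j hj => huniq j (Fin.ext hj)⟩

end Rank

section Cyclic

variable {M : Type*} [AddCommGroup M] {m : ℕ} [NeZero m] (x : Fin m → M)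

def cyclicPartialSum (n : ℕ) : M :=
  ∑ l ∈ range n, x l

variable {x}

lemma cyclicPartialSum_periodic (hsum : ∑ i, x i = 0) : Periodic (cyclicPartialSum x) m := by
  intro n
  rw [add_comm, cyclicPartialSum, sum_range_add]
  simp [← Fin.sum_univ_eq_sum_range (fun l => x l), hsum, cyclicPartialSum]

lemma sum_range_add_eq_cyclicPartialSum_sub (hsum : ∑ i, x i = 0) (i : Fin m) (t : ℕ) :
    ∑ l ∈ range t, x (i + l) = cyclicPartialSum x ↑(i + t) - cyclicPartialSum x i := by
  have hval : ((i + t : Fin m) : ℕ) = (i + t) % m := by simp [Fin.val_add]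
  rw [hval, (cyclicPartialSum_periodic hsum).map_mod_nat, cyclicPartialSum, cyclicPartialSum,
    sum_range_add_sub_sum_range]
  simp

lemma injective_cyclicPartialSum (hsum : ∑ i, x i = 0)
    (hnz : ∀ i : Fin m, ∀ t : ℕ, 1 ≤ t → t < m → ∑ l ∈ range t, x (i + l) ≠ 0) :
    Injective fun j : Fin m => cyclicPartialSum x j := by
  intro i j hij
  by_contra hne
  have hpos : 1 ≤ ((j - i : Fin m) : ℕ) :=
    Nat.one_le_iff_ne_zero.mpr (Fin.val_ne_zero_iff.mpr (sub_ne_zero.mpr (Ne.symm hne)))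
  apply hnz i _ hpos (j - i).isLt
  rw [sum_range_add_eq_cyclicPartialSum_sub hsum, Fin.cast_val_eq_self, add_sub_cancel,
    sub_eq_zero]
  exact hij.symm

lemma card_pos_sum_range_add_eq [LinearOrder M] [IsOrderedAddMonoid M] (hsum : ∑ i, x i = 0)
    (i : Fin m) :
    #{k : Fin m | 0 < ∑ l ∈ range (k + 1), x (i + l)}
      = #{j : Fin m | cyclicPartialSum x i < cyclicPartialSum x j} := by
  refine card_equiv (Equiv.addLeft (i + 1)) fun k => ?_
  simp [sum_range_add_eq_cyclicPartialSum_sub hsum, add_comm (k : Fin m)]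

end Cyclic

/-- **Spitzer's theorem.** Let `x : Fin m → ℝ` with `∑ x i = 0`, such that no
cyclically consecutive sum with fewer than `m` terms vanishes: for every starting
point `i` and length `t` with `1 ≤ t < m`, `∑_{l < t} x (i + l) ≠ 0`.  Then for
each `r ∈ {0, …, m-1}`, exactly one of the `m` cyclic shifts of `x` has exactly
`r` positive partial sums. -/
theorem stmt1 (m : ℕ) [NeZero m] (x : Fin m → ℝ) (hsum : ∑ i, x i = 0)
    (hnz : ∀ i : Fin m, ∀ t : ℕ, 1 ≤ t → t < m →
      ∑ l ∈ Finset.range t, x (i + Fin.ofNat m l) ≠ 0)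
    (r : ℕ) (hr : r < m) :
    ∃! i : Fin m,
      (Finset.univ.filter (fun k : Fin m =>
        0 < ∑ l ∈ Finset.range ((k : ℕ) + 1), x (i + Fin.ofNat m l))).card = r := by
  simp only [Fin.ofNat_eq_cast] at hnz ⊢
  simp only [card_pos_sum_range_add_eq hsum]
  exact existsUnique_card_filter_lt_eq (injective_cyclicPartialSum hsum hnz)
    (by rwa [Fintype.card_fin])
end

section
/- The number of lattice paths from (0,0) to (kn,0) consisting of (k−1)n up steps (1,1) and n down steps (1,1−k) that never go below the x-axis equals the Fuss–Catalan number C_{n,k} = (1/(kn+1))·binom(kn+1, n). -/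
/-!
Prepending an up step identifies the paths of the statement with the sequences of `kn + 1` steps,
`n` of them down, all of whose partial sums are positive. Such a sequence has total
`(kn + 1) - kn = 1`, and by the cycle lemma an integer sequence with total `1` has exactly one
cyclic rotation with all partial sums positive: the one starting right after the last minimum of
its partial sums. Rotations preserve the number of down steps, so counting pairs (sequence, good
rotation) gives `(kn + 1) · #{positive sequences} = binom(kn + 1, n)`.
-/

open Finset

namespace Raney

section CycleLemma

variable {f : ℕ → ℤ} {N : ℕ}

def StaysAboveAfter (f : ℕ → ℤ) (r : ℕ) : Prop := ∀ m, r < m → f r < f m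

theorem exists_staysAboveAfter (hN : 0 < N) (hf : ∀ m, f (m + N) = f m + 1) :
    ∃ r < N, StaysAboveAfter f r := by
  -- the drift makes `N * f m - m` periodic, and at its minimiser `r`,
  -- `N * (f m - f r) ≥ m - r > 0` for every `m > r`
  have hφ : Function.Periodic (fun m : ℕ => N * f m - m) N := fun m => by
    simp only [hf, Nat.cast_add]; ring
  obtain ⟨r, hr, hmin⟩ := (range N).exists_min_image (fun m : ℕ => N * f m - m)
    (nonempty_range_iff.2 hN.ne')
  refine ⟨r, mem_range.1 hr, fun m hrm => ?_⟩
  have hle := hmin _ (mem_range.2 (m.mod_lt hN))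
  rw [hφ.map_mod_nat] at hle
  have : (r : ℤ) < m := by exact_mod_cast hrm
  by_contra! h
  nlinarith

theorem StaysAboveAfter.eq (hf : ∀ m, f (m + N) = f m + 1) {r r' : ℕ} (hr : r < N)
    (hr' : r' < N) (h : StaysAboveAfter f r) (h' : StaysAboveAfter f r') : r = r' := by
  by_contra hne
  wlog hlt : r < r' generalizing r r'
  · exact this hr' hr h' h (Ne.symm hne) (by omega)
  have := h r' hlt
  have := h' (r + N) (by omega)
  have := hf r
  omega

theorem staysAboveAfter_iff (hf : ∀ m, f (m + N) = f m + 1) {r : ℕ} :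
    StaysAboveAfter f r ↔ ∀ m, 0 < m → m ≤ N → f r < f (r + m) := by
  refine ⟨fun h m hm _ => h (r + m) (by omega), fun h => ?_⟩
  have hN : N ≠ 0 := by rintro rfl; simpa using hf 0
  suffices ∀ j, 0 < j → f r < f (r + j) from fun m hm => by
    simpa [Nat.add_sub_cancel' hm.le] using this (m - r) (by omega)
  intro j
  induction j using Nat.strong_induction_on with
  | _ j ih =>
    intro hj
    rcases le_or_gt j N with hjN | hjN
    · exact h j hj hjN
    · have := ih (j - N) (by omega) (by omega)
      rw [show r + j = r + (j - N) + N by omega, hf]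
      omega

end CycleLemma

def IsPositive {N : ℕ} (x : Fin N → ℤ) : Prop := ∀ j, 0 < ∑ i ∈ Iic j, x i

instance {N : ℕ} : DecidablePred (IsPositive (N := N)) := fun _ => Fintype.decidableForallFintype

section Rotation

open Fin.NatCast

variable {N : ℕ} [NeZero N] (x : Fin N → ℤ)

/-- Partial sums of the periodic extension of `x` (the cast `ℕ → Fin N` reduces mod `N`). -/
def psum (m : ℕ) : ℤ := ∑ i ∈ range m, x i

theorem sum_Iic_eq_psum (j : Fin N) : ∑ i ∈ Iic j, x i = psum x (j + 1) := by
  rw [psum, Nat.range_succ_eq_Iic, ← Fin.map_valEmbedding_Iic, sum_map]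
  simp

theorem psum_add_period (m : ℕ) : psum x (m + N) = psum x m + ∑ i, x i := by
  rw [psum, add_comm, sum_range_add, psum, add_comm, ← Fin.sum_univ_eq_sum_range (fun i => x i)]
  simp

theorem psum_rotate (r : Fin N) (m : ℕ) :
    psum (fun i => x (i + r)) m = psum x (r + m) - psum x r := by
  rw [psum, psum, psum, sum_range_add]
  simp [add_comm]

variable {x}

theorem isPositive_rotate_iff (hx : ∑ i, x i = 1) (r : Fin N) :
    IsPositive (fun i => x (i + r)) ↔ StaysAboveAfter (psum x) r := by
  rw [staysAboveAfter_iff (fun m => by rw [psum_add_period, hx])]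
  simp only [IsPositive, sum_Iic_eq_psum, psum_rotate, sub_pos]
  refine ⟨fun h m hm hmN => ?_, fun h j => h _ j.val.succ_pos j.isLt⟩
  simpa [Nat.sub_add_cancel hm] using h ⟨m - 1, by omega⟩

theorem existsUnique_isPositive_rotate (hx : ∑ i, x i = 1) :
    ∃! r : Fin N, IsPositive (fun i => x (i + r)) := by
  have hf : ∀ m, psum x (m + N) = psum x m + 1 := fun m => by rw [psum_add_period, hx]
  simp only [isPositive_rotate_iff hx]
  obtain ⟨r, hr, hpos⟩ := exists_staysAboveAfter (NeZero.pos N) hf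
  refine ⟨⟨r, hr⟩, hpos, fun r' hr' => Fin.ext (hr'.eq hf r'.isLt hr hpos)⟩

end Rotation

section Counting

variable {N : ℕ} [NeZero N] {α : Type*}

theorem card_filter_rotate {s : Finset (Fin N → α)} (hs : ∀ g ∈ s, ∀ r, (fun i => g (i + r)) ∈ s)
    (p : (Fin N → α) → Prop) [DecidablePred p] (r : Fin N) :
    #{g ∈ s | p (fun i => g (i + r))} = #{g ∈ s | p g} := by
  refine card_nbij' (fun g i => g (i + r)) (fun g i => g (i - r)) ?_ ?_ ?_ ?_ <;>
    intro g hg <;> simp_all [sub_eq_add_neg]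

theorem card_filter_isPositive_mul (w : α → ℤ) {s : Finset (Fin N → α)}
    (hs : ∀ g ∈ s, ∀ r, (fun i => g (i + r)) ∈ s) (hw : ∀ g ∈ s, ∑ i, w (g i) = 1) :
    #{g ∈ s | IsPositive (w ∘ g)} * N = #s := by
  have hrot (r : Fin N) : #{g ∈ s | IsPositive (w ∘ fun i => g (i + r))} =
      #{g ∈ s | IsPositive (w ∘ g)} :=
    card_filter_rotate hs (fun g => IsPositive (w ∘ g)) r
  have hunique (g) (hg : g ∈ s) : #{r | IsPositive (w ∘ fun i => g (i + r))} = 1 :=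
    (Fintype.existsUnique_iff_card_one _).1 (existsUnique_isPositive_rotate (hw g hg))
  calc #{g ∈ s | IsPositive (w ∘ g)} * N
      = ∑ r : Fin N, #{g ∈ s | IsPositive (w ∘ fun i => g (i + r))} := by simp [hrot, mul_comm]
    _ = ∑ g ∈ s, #{r | IsPositive (w ∘ fun i => g (i + r))} := by
        simp only [card_filter]
        exact sum_comm
    _ = #s := by rw [card_eq_sum_ones]; exact sum_congr rfl hunique

theorem card_filter_add_right (p : Fin N → Prop) [DecidablePred p] (r : Fin N) :
    #{i | p (i + r)} = #{i | p i} := by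
  refine card_nbij' (· + r) (· - r) ?_ ?_ ?_ ?_ <;> intro i <;> simp

end Counting

theorem card_filter_card_false_eq_choose {ι : Type*} [Fintype ι] [DecidableEq ι] (n : ℕ) :
    #{g : ι → Bool | #{i | g i = false} = n} = (Fintype.card ι).choose n := by
  rw [← card_univ, ← card_powersetCard]
  refine card_nbij' (fun g => ({i | g i = false} : Finset ι)) (fun t i => decide (i ∉ t))
    ?_ ?_ ?_ ?_
  · intro g; simp
  · intro t; simp
  · intro g _; funext i; cases h : g i <;> simp [h]
  · intro t _; ext i; simp

theorem sum_Iic_succ_cons {M : ℕ} (a : ℤ) (x : Fin M → ℤ) (j : Fin M) :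
    ∑ i ∈ Iic j.succ, (Fin.cons a x : Fin (M + 1) → ℤ) i = a + ∑ i ∈ Iic j, x i := by
  rw [← Icc_bot, Icc_eq_cons_Ioc bot_le, sum_cons, bot_eq_zero, ← Fin.map_succEmb_Iic, sum_map]
  simp

theorem sum_Iic_zero {M : ℕ} (x : Fin (M + 1) → ℤ) : ∑ i ∈ Iic 0, x i = x 0 := by
  rw [← bot_eq_zero, Iic_bot, sum_singleton]

theorem isPositive_cons_iff {M : ℕ} (a : ℤ) (x : Fin M → ℤ) :
    IsPositive (Fin.cons a x : Fin (M + 1) → ℤ) ↔ 0 < a ∧ ∀ j, 0 < a + ∑ i ∈ Iic j, x i := by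
  simp [IsPositive, Fin.forall_fin_succ, sum_Iic_succ_cons, sum_Iic_zero]

section Paths

variable {k : ℕ}

def step (k : ℕ) (b : Bool) : ℤ := if b then 1 else 1 - k

theorem sum_step {N : ℕ} (g : Fin N → Bool) : ∑ i, step k (g i) = N - k * #{i | g i = false} := by
  have (b : Bool) : step k b = 1 - k * if b = false then 1 else 0 := by cases b <;> simp [step]
  simp only [this, sum_sub_distrib, ← mul_sum, card_filter, sum_const, card_univ, Fintype.card_fin]
  push_cast
  ring

theorem isPositive_step_cons_true_iff {M : ℕ} (s : Fin M → Bool) :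
    IsPositive (step k ∘ Fin.cons true s) ↔ ∀ j, 0 ≤ ∑ i ∈ Iic j, step k (s i) := by
  rw [Fin.comp_cons, isPositive_cons_iff]
  simp only [step, if_true, zero_lt_one, true_and, Function.comp_apply]
  exact forall_congr' fun j => by omega

theorem eq_true_of_isPositive_step (hk : 1 ≤ k) {M : ℕ} {g : Fin (M + 1) → Bool}
    (h : IsPositive (step k ∘ g)) : g 0 = true := by
  by_contra hg
  have := h 0
  rw [sum_Iic_zero] at this
  simp [step, hg] at this
  omega

theorem card_nonneg_eq_card_isPositive (hk : 1 ≤ k) (M n : ℕ) :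
    #{s : Fin M → Bool | #{i | s i = false} = n ∧ ∀ j, 0 ≤ ∑ i ∈ Iic j, step k (s i)} =
      #{g : Fin (M + 1) → Bool | #{i | g i = false} = n ∧ IsPositive (step k ∘ g)} := by
  have hcons (s : Fin M → Bool) :
      #{i | (Fin.cons true s : Fin (M + 1) → Bool) i = false} = #{i | s i = false} := by
    simp [Fin.card_filter_univ_succ]
  have hself {g : Fin (M + 1) → Bool} (h : IsPositive (step k ∘ g)) :
      Fin.cons true (Fin.tail g) = g := by
    rw [← eq_true_of_isPositive_step hk h, Fin.cons_self_tail]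
  refine card_nbij' (fun s => Fin.cons true s) Fin.tail ?_ ?_ ?_ ?_
  · intro s; simp [hcons, isPositive_step_cons_true_iff]
  · intro g hg
    simp only [coe_filter, mem_univ, true_and, Set.mem_ofPred_eq] at hg ⊢
    rw [← hself hg.2, hcons, isPositive_step_cons_true_iff] at hg
    exact hg
  · intro s _; exact Fin.tail_cons _ _
  · intro g hg
    simp only [coe_filter, mem_univ, true_and, Set.mem_ofPred_eq] at hg
    exact hself hg.2

end Paths
end Raney

open Raney in
/-- **Raney's lemma.** A lattice path with `k·n` steps is encoded by
`s : Fin (k·n) → Bool`, where `true` is an up step `(1,1)` and `false` is a down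
step `(1, 1-k)`.  The number of such paths with exactly `n` down steps (hence
`(k-1)·n` up steps) all of whose partial height sums are nonnegative (never going
below the x-axis; such a path necessarily ends at height `0`) equals the
Fuss–Catalan number `C_{n,k} = (1/(kn+1))·binom(kn+1, n)`. -/
theorem stmt4 (k n : ℕ) (hk : 2 ≤ k) :
    ((Finset.univ.filter (fun s : Fin (k * n) → Bool =>
        (Finset.univ.filter (fun i => s i = false)).card = n ∧
        ∀ j : Fin (k * n),
          0 ≤ ∑ i ∈ Finset.univ.filter (fun i : Fin (k * n) => i ≤ j),
            (if s i then (1 : ℤ) else 1 - (k : ℤ)))).card : ℚ)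
      = (Nat.choose (k * n + 1) n : ℚ) / (k * n + 1) := by
  have hcount := card_filter_isPositive_mul (N := k * n + 1) (step k)
    (s := {g | #{i | g i = false} = n})
    (fun g hg r => by simpa [card_filter_add_right (fun i => g i = false)] using hg)
    (fun g hg => by rw [sum_step, (mem_filter.1 hg).2]; push_cast; ring)
  rw [filter_filter, card_filter_card_false_eq_choose, Fintype.card_fin] at hcount
  have hpaths := card_nonneg_eq_card_isPositive (by omega : 1 ≤ k) (k * n) n
  rw [← hpaths] at hcount
  simp only [filter_ge_eq_Iic]
  rw [eq_div_iff (by positivity), show (k * n + 1 : ℚ) = (k * n + 1 : ℕ) by push_cast; rfl,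
    ← Nat.cast_mul]
  exact congrArg Nat.cast hcount
end

section
/- Among all lattice paths from (0,0) to (2n,0) with n up steps (1,1) and n down steps (1,−1), for each r in {0,1,...,n} the number of paths having exactly 2r steps above the x-axis equals the Catalan number C_n = (1/(n+1))·binom(2n,n). -/
/-!
Cut a balanced path at its first return to the axis: it is an arch of length `2k + 2` (up, a Dyck
path of semilength `k`, down; or the mirror image) followed by a balanced path of semilength `j`,
with `k + j = n - 1`. A positive arch has all its steps above the axis, a negative one none.
Hence, by induction, the number of paths of semilength `n` with `2r ≤ 2n` steps above the axis is
`∑_{k+j=n-1} C_k C_j ([k < r] + [r ≤ j])`; exchanging `k` and `j` in the second half turns the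
two conditions into complementary ones, leaving the Catalan recurrence `∑ C_k C_j = C_n`.
-/

open Finset

namespace ChungFeller

def step (b : Bool) : ℤ := if b then 1 else -1

def height (l : List Bool) (k : ℕ) : ℤ := ((l.map step).take k).sum

def IsBalanced (l : List Bool) : Prop := (l.map step).sum = 0

def IsDyck (l : List Bool) : Prop := IsBalanced l ∧ ∀ k, 0 ≤ height l k

def posSteps (l : List Bool) : ℕ :=
  #{i ∈ range l.length | 0 < max (height l i) (height l (i + 1))}

@[simp] lemma step_true : step true = 1 := rfl

@[simp] lemma step_false : step false = -1 := rfl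

@[simp] lemma step_not (b : Bool) : step (!b) = -step b := by cases b <;> rfl

lemma sum_map_step (l : List Bool) : (l.map step).sum = l.count true - l.count false := by
  induction l with
  | nil => simp
  | cons b l ih => cases b <;> simp [ih] <;> ring

lemma IsBalanced.length_eq {l : List Bool} (hl : IsBalanced l) : l.length = 2 * l.count true := by
  have := sum_map_step l
  have := List.count_true_add_count_false l
  rw [IsBalanced] at hl
  omega

@[simp] lemma height_zero (l : List Bool) : height l 0 = 0 := by simp [height]

lemma height_of_length_le {l : List Bool} {k : ℕ} (hk : l.length ≤ k) :
    height l k = (l.map step).sum := by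
  rw [height, List.take_of_length_le (by simpa using hk)]

lemma height_succ {l : List Bool} {k : ℕ} (hk : k < l.length) :
    height l (k + 1) = height l k + step l[k] := by
  rw [height, height, List.sum_take_succ _ _ (by simpa using hk), List.getElem_map]

lemma height_append_of_le {a b : List Bool} {k : ℕ} (hk : k ≤ a.length) :
    height (a ++ b) k = height a k := by
  simp [height, List.take_append, Nat.sub_eq_zero_of_le hk]

lemma height_append_add (a b : List Bool) (k : ℕ) :
    height (a ++ b) (a.length + k) = (a.map step).sum + height b k := by
  simp [height, List.take_append, List.take_of_length_le]

lemma height_cons_succ (b : Bool) (l : List Bool) (k : ℕ) :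
    height (b :: l) (k + 1) = step b + height l k := by
  simp [height]

lemma sum_map_step_map_not (l : List Bool) :
    ((l.map not).map step).sum = -(l.map step).sum := by
  induction l with
  | nil => simp
  | cons b l ih => simp only [List.map_cons, List.sum_cons, step_not, ih]; ring

lemma height_map_not (l : List Bool) (k : ℕ) : height (l.map not) k = -height l k := by
  simp only [height, ← List.map_take, sum_map_step_map_not]

lemma IsBalanced.map_not {l : List Bool} (hl : IsBalanced l) : IsBalanced (l.map not) := by
  rw [IsBalanced, sum_map_step_map_not, hl, neg_zero]

lemma IsBalanced.append {a b : List Bool} (ha : IsBalanced a) (hb : IsBalanced b) :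
    IsBalanced (a ++ b) := by
  rw [IsBalanced, List.map_append, List.sum_append, ha, hb, add_zero]

lemma posSteps_append {a b : List Bool} (ha : IsBalanced a) :
    posSteps (a ++ b) = posSteps a + posSteps b := by
  simp only [posSteps, card_filter, List.length_append, sum_range_add]
  congr 1
  · refine sum_congr rfl fun i hi => ?_
    rw [mem_range] at hi
    rw [height_append_of_le hi.le, height_append_of_le hi]
  · refine sum_congr rfl fun i _ => ?_
    rw [add_assoc, height_append_add, height_append_add, ha, zero_add, zero_add]

lemma posSteps_le_length (l : List Bool) : posSteps l ≤ l.length :=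
  (card_filter_le _ _).trans (card_range _).le

lemma posSteps_eq_zero {l : List Bool} (hl : ∀ k, height l k ≤ 0) : posSteps l = 0 := by
  simp only [posSteps, card_eq_zero, filter_eq_empty_iff, not_lt, max_le_iff]
  exact fun i _ => ⟨hl i, hl (i + 1)⟩

def arch (M : List Bool) : List Bool := true :: (M ++ [false])

lemma arch_append (M B : List Bool) : arch M ++ B = true :: (M ++ false :: B) := by
  simp [arch]

lemma length_arch (M : List Bool) : (arch M).length = M.length + 2 := by
  simp [arch]

lemma height_arch_succ {M : List Bool} {k : ℕ} (hk : k ≤ M.length) :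
    height (arch M) (k + 1) = 1 + height M k := by
  rw [arch, height_cons_succ, height_append_of_le hk, step_true]

lemma isBalanced_arch {M : List Bool} (hM : IsBalanced M) : IsBalanced (arch M) := by
  simpa [IsBalanced, arch] using hM

lemma IsDyck.arch {M : List Bool} (hM : IsDyck M) : IsDyck (arch M) := by
  refine ⟨isBalanced_arch hM.1, fun k => ?_⟩
  rcases k with _ | k
  · simp
  rcases le_or_gt k M.length with hk | hk
  · rw [height_arch_succ hk]
    linarith [hM.2 k]
  · rw [height_of_length_le (by rw [length_arch]; omega), isBalanced_arch hM.1]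

lemma posSteps_arch {M : List Bool} (hM : IsDyck M) : posSteps (arch M) = M.length + 2 := by
  rw [posSteps, filter_true_of_mem, card_range, length_arch]
  intro i hi
  rw [mem_range, length_arch] at hi
  rcases i with _ | i
  · rw [height_arch_succ (Nat.zero_le _)]
    simp
  · rw [height_arch_succ (by omega)]
    exact lt_max_of_lt_left (by linarith [hM.2 i])

lemma posSteps_map_not {l : List Bool} (hl : IsDyck l) : posSteps (l.map not) = 0 :=
  posSteps_eq_zero fun k => by rw [height_map_not]; linarith [hl.2 k]

lemma exists_isDyck_append_false {l : List Bool} (hl : (l.map step).sum < 0) :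
    ∃ M B, IsDyck M ∧ l = M ++ false :: B := by
  classical
  have hex : ∃ k, height l k < 0 := ⟨l.length, by rwa [height_of_length_le le_rfl]⟩
  obtain ⟨k, hk⟩ : ∃ k, Nat.find hex = k + 1 :=
    Nat.exists_eq_add_one_of_ne_zero fun h0 => by simpa [h0] using Nat.find_spec hex
  have hneg := Nat.find_spec hex
  have hbefore : ∀ i ≤ k, 0 ≤ height l i := fun i hi =>
    not_lt.mp (Nat.find_min hex (by omega))
  rw [hk] at hneg
  have hkl : k < l.length := by
    by_contra! h
    rw [height_of_length_le (by omega), ← height_of_length_le h] at hneg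
    linarith [hbefore k le_rfl]
  have hstep := height_succ hkl
  have hfalse : l[k] = false := by
    cases h : l[k]
    · rfl
    · rw [h, step_true] at hstep; linarith [hbefore k le_rfl]
  refine ⟨l.take k, l.drop (k + 1), ⟨?_, fun i => ?_⟩, ?_⟩
  · rw [hfalse, step_false] at hstep
    have := hbefore k le_rfl
    rw [IsBalanced, List.map_take]
    change height l k = 0
    omega
  · simpa [height, ← List.map_take, List.take_take] using hbefore (min i k) (min_le_right _ _)
  · rw [← hfalse, ← List.drop_eq_getElem_cons hkl, List.take_append_drop]

lemma length_le_of_isDyck_append_false {M M' B B' : List Bool} (hM : IsBalanced M)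
    (hM' : IsDyck M') (h : M ++ false :: B = M' ++ false :: B') : M'.length ≤ M.length := by
  by_contra! hlt
  have := hM'.2 (M.length + 1)
  rw [← height_append_of_le (b := false :: B') (k := M.length + 1) hlt, ← h, height_append_add,
    hM, height_cons_succ] at this
  simp at this

lemma arch_append_inj {M M' B B' : List Bool} (hM : IsDyck M) (hM' : IsDyck M')
    (h : arch M ++ B = arch M' ++ B') : M = M' ∧ B = B' := by
  rw [arch_append, arch_append, List.cons_inj_right] at h
  have hlen := (length_le_of_isDyck_append_false hM'.1 hM h.symm).antisymm
    (length_le_of_isDyck_append_false hM.1 hM' h)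
  obtain ⟨hMM, hBB⟩ := List.append_inj h hlen
  exact ⟨hMM, List.cons_inj_right _ |>.mp hBB⟩

def signedArch (b : Bool) (M : List Bool) : List Bool := if b then arch M else (arch M).map not

lemma length_signedArch (b : Bool) (M : List Bool) : (signedArch b M).length = M.length + 2 := by
  cases b <;> simp [signedArch, length_arch]

lemma isBalanced_signedArch (b : Bool) {M : List Bool} (hM : IsBalanced M) :
    IsBalanced (signedArch b M) := by
  cases b
  · exact (isBalanced_arch hM).map_not
  · exact isBalanced_arch hM

lemma posSteps_signedArch_append (b : Bool) {M : List Bool} (hM : IsDyck M) (B : List Bool) :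
    posSteps (signedArch b M ++ B) = (if b then M.length + 2 else 0) + posSteps B := by
  rw [posSteps_append (isBalanced_signedArch b hM.1)]
  cases b
  · simp [signedArch, posSteps_map_not hM.arch]
  · simp [signedArch, posSteps_arch hM]

lemma exists_signedArch_append {l : List Bool} (hl : IsBalanced l) (hne : l ≠ []) :
    ∃ b M B, IsDyck M ∧ IsBalanced B ∧ l = signedArch b M ++ B := by
  obtain ⟨x, rest, rfl⟩ := List.exists_cons_of_ne_nil hne
  cases x
  · obtain ⟨M, B, hM, hrest⟩ := exists_isDyck_append_false (l := rest.map not) (by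
      simp only [IsBalanced, List.map_cons, List.sum_cons, step_false] at hl
      rw [sum_map_step_map_not]
      linarith)
    have hrest' : rest = M.map not ++ true :: B.map not := by
      simpa [List.map_map, Function.comp_def] using congrArg (List.map not) hrest
    refine ⟨false, M, B.map not, hM, ?_, by simp [signedArch, arch, hrest']⟩
    refine IsBalanced.map_not ?_
    have hsum := congrArg (fun l => (l.map step).sum) hrest
    have := hM.1
    simp only [IsBalanced, List.map_cons, List.sum_cons, List.map_append, List.sum_append,
      sum_map_step_map_not, step_false] at hl hsum this ⊢
    linarith
  · obtain ⟨M, B, hM, rfl⟩ := exists_isDyck_append_false (l := rest) (by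
      simp only [IsBalanced, List.map_cons, List.sum_cons, step_true] at hl
      linarith)
    refine ⟨true, M, B, hM, ?_, by simp [signedArch, arch_append]⟩
    have := hM.1
    simp only [IsBalanced, List.map_cons, List.sum_cons, List.map_append, List.sum_append,
      step_true, step_false] at hl this ⊢
    linarith

lemma signedArch_append_inj {b b' : Bool} {M M' B B' : List Bool} (hM : IsDyck M)
    (hM' : IsDyck M') (h : signedArch b M ++ B = signedArch b' M' ++ B') :
    b = b' ∧ M = M' ∧ B = B' := by
  cases b <;> cases b'
  · have := congrArg (List.map not) h
    simp only [signedArch, List.map_append, List.map_map, Function.comp_def, Bool.not_not,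
      List.map_id', Bool.false_eq_true, if_false] at this
    obtain ⟨hMM, hBB⟩ := arch_append_inj hM hM' this
    refine ⟨rfl, hMM, ?_⟩
    simpa [List.map_map, Function.comp_def] using congrArg (List.map not) hBB
  · simp [signedArch, arch] at h
  · simp [signedArch, arch] at h
  · exact ⟨rfl, arch_append_inj hM hM' h⟩

instance (l : List Bool) : Decidable (IsBalanced l) := inferInstanceAs (Decidable (_ = _))

def listsOfLength (m : ℕ) : Finset (List Bool) := univ.image (List.ofFn (n := m))

lemma mem_listsOfLength {m : ℕ} {l : List Bool} : l ∈ listsOfLength m ↔ l.length = m := by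
  simp only [listsOfLength, mem_image, mem_univ, true_and]
  constructor
  · rintro ⟨s, rfl⟩
    exact List.length_ofFn
  · rintro rfl
    exact ⟨fun i => l[i], List.ofFn_getElem⟩

def balancedPaths (n : ℕ) : Finset (List Bool) := (listsOfLength (2 * n)).filter IsBalanced

open scoped Classical in
noncomputable def dyckPaths (n : ℕ) : Finset (List Bool) := (listsOfLength (2 * n)).filter IsDyck

def countAbove (n r : ℕ) : ℕ := #{l ∈ balancedPaths n | posSteps l = 2 * r}

lemma mem_balancedPaths {n : ℕ} {l : List Bool} :
    l ∈ balancedPaths n ↔ l.length = 2 * n ∧ IsBalanced l := by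
  rw [balancedPaths, mem_filter, mem_listsOfLength]

open scoped Classical in
lemma mem_dyckPaths {n : ℕ} {l : List Bool} :
    l ∈ dyckPaths n ↔ l.length = 2 * n ∧ IsDyck l := by
  rw [dyckPaths, mem_filter, mem_listsOfLength]

def toDyckStep (b : Bool) : DyckStep := if b then .U else .D

lemma toDyckStep_injective : Function.Injective toDyckStep := by decide

lemma count_U_map_toDyckStep (l : List Bool) : (l.map toDyckStep).count .U = l.count true :=
  List.count_map_of_injective _ _ toDyckStep_injective true

lemma count_D_map_toDyckStep (l : List Bool) : (l.map toDyckStep).count .D = l.count false :=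
  List.count_map_of_injective _ _ toDyckStep_injective false

lemma height_eq_count (l : List Bool) (k : ℕ) :
    height l k = (l.take k).count true - (l.take k).count false := by
  rw [height, ← List.map_take, sum_map_step]

lemma isDyck_iff_map_toDyckStep {l : List Bool} : IsDyck l ↔
    (l.map toDyckStep).count .U = (l.map toDyckStep).count .D ∧
      ∀ k, ((l.map toDyckStep).take k).count .D ≤ ((l.map toDyckStep).take k).count .U := by
  simp only [IsDyck, IsBalanced, sum_map_step, height_eq_count, ← List.map_take,
    count_U_map_toDyckStep, count_D_map_toDyckStep]
  exact and_congr (by omega) (forall_congr' fun k => by omega)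

lemma map_toDyckStep_map_beq_U (s : List DyckStep) : (s.map (· == .U)).map toDyckStep = s := by
  rw [List.map_map, show toDyckStep ∘ (· == .U) = id from funext fun x => by cases x <;> rfl,
    List.map_id]

theorem card_dyckPaths (n : ℕ) : #(dyckPaths n) = catalan n := by
  rw [← DyckWord.card_dyckWord_semilength_eq_catalan, ← card_univ]
  have hdyck {l} (hl : l ∈ dyckPaths n) := isDyck_iff_map_toDyckStep.mp (mem_dyckPaths.mp hl).2
  refine card_bij' (fun l hl => ⟨⟨l.map toDyckStep, (hdyck hl).1, (hdyck hl).2⟩, ?_⟩)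
    (fun p _ => p.1.toList.map (· == .U)) (fun _ _ => mem_univ _) (fun p _ => ?_) (fun l _ => ?_)
    (fun p _ => ?_)
  · obtain ⟨hlen, hl⟩ := mem_dyckPaths.mp hl
    have := hl.1.length_eq
    rw [DyckWord.semilength, count_U_map_toDyckStep]
    omega
  · rw [mem_dyckPaths, isDyck_iff_map_toDyckStep, map_toDyckStep_map_beq_U, List.length_map,
      ← DyckWord.two_mul_semilength_eq_length, p.2]
    exact ⟨rfl, p.1.count_U_eq_count_D, p.1.count_D_le_count_U⟩
  · rw [List.map_map, show (· == .U) ∘ toDyckStep = id from funext fun b => by cases b <;> rfl,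
      List.map_id]
  · exact Subtype.ext (DyckWord.ext (map_toDyckStep_map_beq_U _))

lemma sum_balancedPaths_succ {β : Type*} [AddCommMonoid β] (n : ℕ) (f : List Bool → β) :
    ∑ l ∈ balancedPaths (n + 1), f l =
      ∑ kj ∈ antidiagonal n, ∑ b : Bool,
        ∑ M ∈ dyckPaths kj.1, ∑ B ∈ balancedPaths kj.2, f (signedArch b M ++ B) := by
  let S : Finset ((_ : ℕ × ℕ) × Bool × List Bool × List Bool) :=
    (antidiagonal n).sigma fun kj => univ ×ˢ dyckPaths kj.1 ×ˢ balancedPaths kj.2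
  have hS {k j : ℕ} {b : Bool} {M B : List Bool} : ⟨(k, j), (b, M, B)⟩ ∈ S ↔
      k + j = n ∧ (M.length = 2 * k ∧ IsDyck M) ∧ B.length = 2 * j ∧ IsBalanced B := by
    simp [S, mem_dyckPaths, mem_balancedPaths]
  calc ∑ l ∈ balancedPaths (n + 1), f l
      = ∑ x ∈ S, f (signedArch x.2.1 x.2.2.1 ++ x.2.2.2) := by
        refine (sum_bij (fun x _ => signedArch x.2.1 x.2.2.1 ++ x.2.2.2) ?_ ?_ ?_
          fun _ _ => rfl).symm
        · rintro ⟨⟨k, j⟩, b, M, B⟩ hx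
          obtain ⟨hkj, ⟨hMl, hM⟩, hBl, hB⟩ := hS.mp hx
          refine mem_balancedPaths.mpr ⟨?_, (isBalanced_signedArch b hM.1).append hB⟩
          dsimp only
          rw [List.length_append, length_signedArch]
          omega
        · rintro ⟨⟨k, j⟩, b, M, B⟩ hx ⟨⟨k', j'⟩, b', M', B'⟩ hy h
          obtain ⟨hkj, ⟨hMl, hM⟩, -, -⟩ := hS.mp hx
          obtain ⟨hkj', ⟨hMl', hM'⟩, -, -⟩ := hS.mp hy
          obtain ⟨rfl, rfl, rfl⟩ := signedArch_append_inj hM hM' h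
          obtain rfl : k = k' := by omega
          obtain rfl : j = j' := by omega
          rfl
        · intro l hl
          obtain ⟨hl, hbal⟩ := mem_balancedPaths.mp hl
          obtain ⟨b, M, B, hM, hB, rfl⟩ :=
            exists_signedArch_append hbal (List.ne_nil_of_length_pos (by omega))
          have := hM.1.length_eq
          have := hB.length_eq
          rw [List.length_append, length_signedArch] at hl
          exact ⟨⟨(M.count true, B.count true), (b, M, B)⟩,
            hS.mpr ⟨by omega, ⟨by omega, hM⟩, by omega, hB⟩, rfl⟩
    _ = _ := by simp only [S, sum_sigma, sum_product]

lemma countAbove_eq_zero {n r : ℕ} (h : n < r) : countAbove n r = 0 := by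
  rw [countAbove, card_eq_zero, filter_eq_empty_iff]
  intro l hl
  have := posSteps_le_length l
  rw [(mem_balancedPaths.mp hl).1] at this
  omega

lemma countAbove_zero_zero : countAbove 0 0 = 1 := by decide

lemma countAbove_succ (n r : ℕ) :
    countAbove (n + 1) r = ∑ kj ∈ antidiagonal n, catalan kj.1 *
      ((if kj.1 < r then countAbove kj.2 (r - (kj.1 + 1)) else 0) + countAbove kj.2 r) := by
  rw [countAbove, card_filter, sum_balancedPaths_succ]
  refine sum_congr rfl fun ⟨k, j⟩ _ => ?_
  have hup : ∀ M ∈ dyckPaths k, ∑ B ∈ balancedPaths j,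
      (if posSteps (signedArch true M ++ B) = 2 * r then 1 else 0) =
        if k < r then countAbove j (r - (k + 1)) else 0 := by
    intro M hM
    obtain ⟨hMl, hM⟩ := mem_dyckPaths.mp hM
    simp only [posSteps_signedArch_append true hM, if_true, hMl]
    split_ifs with hkr
    · rw [countAbove, card_filter]
      exact sum_congr rfl fun B _ => if_congr (by omega) rfl rfl
    · exact sum_eq_zero fun B _ => if_neg (by omega)
  have hdown : ∀ M ∈ dyckPaths k, ∑ B ∈ balancedPaths j,
      (if posSteps (signedArch false M ++ B) = 2 * r then 1 else 0) = countAbove j r := by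
    intro M hM
    simp only [posSteps_signedArch_append false (mem_dyckPaths.mp hM).2, Bool.false_eq_true,
      if_false, zero_add, countAbove, card_filter]
  rw [Fintype.sum_bool, sum_congr rfl hup, sum_congr rfl hdown, sum_const, sum_const,
    card_dyckPaths, smul_eq_mul, smul_eq_mul, mul_add]

theorem countAbove_eq_catalan {n r : ℕ} (hr : r ≤ n) : countAbove n r = catalan n := by
  induction n using Nat.strong_induction_on generalizing r with
  | _ n ih =>
    have hcount : ∀ j < n, ∀ s, countAbove j s = if s ≤ j then catalan j else 0 := by
      intro j hj s
      split_ifs with hs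
      · exact ih j hj hs
      · exact countAbove_eq_zero (by omega)
    rcases n with _ | n
    · rw [Nat.le_zero.mp hr, countAbove_zero_zero, catalan_zero]
    have hterm : ∀ kj ∈ antidiagonal n, catalan kj.1 *
        ((if kj.1 < r then countAbove kj.2 (r - (kj.1 + 1)) else 0) + countAbove kj.2 r) =
          (if kj.1 < r then catalan kj.1 * catalan kj.2 else 0) +
            if r ≤ kj.2 then catalan kj.1 * catalan kj.2 else 0 := by
      rintro ⟨k, j⟩ hkj
      rw [HasAntidiagonal.mem_antidiagonal] at hkj
      rw [hcount j (by omega), hcount j (by omega)]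
      split_ifs <;> first | omega | ring
    have hswap :
        ∑ kj ∈ antidiagonal n, (if r ≤ kj.2 then catalan kj.1 * catalan kj.2 else 0) =
          ∑ kj ∈ antidiagonal n, if r ≤ kj.1 then catalan kj.1 * catalan kj.2 else 0 := by
      rw [← Finset.Nat.sum_antidiagonal_swap]
      simp only [Prod.fst_swap, Prod.snd_swap, mul_comm]
    rw [countAbove_succ, sum_congr rfl hterm, sum_add_distrib, hswap, ← sum_add_distrib,
      catalan_succ']
    refine sum_congr rfl fun kj _ => ?_
    split_ifs <;> omega

lemma countAbove_eq_card_ofFn (n r : ℕ) :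
    countAbove n r =
      #{s : Fin (2 * n) → Bool |
        IsBalanced (List.ofFn s) ∧ posSteps (List.ofFn s) = 2 * r} := by
  rw [countAbove, balancedPaths, listsOfLength, filter_filter, filter_image,
    card_image_of_injective _ List.ofFn_injective]

lemma isBalanced_ofFn_iff {n : ℕ} (s : Fin (2 * n) → Bool) :
    IsBalanced (List.ofFn s) ↔ #{i | s i = true} = n := by
  have hcard := card_filter_add_card_filter_not (s := univ) (fun i => s i = true)
  rw [card_univ, Fintype.card_fin] at hcard
  rw [IsBalanced, List.map_ofFn, List.sum_ofFn]
  simp only [Function.comp_apply, step, sum_ite, sum_const, nsmul_eq_mul, mul_one, mul_neg]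
  omega

lemma height_ofFn {m : ℕ} (s : Fin m → Bool) (k : ℕ) :
    height (List.ofFn s) k = ∑ j : Fin m with j.val < k, step (s j) := by
  rw [height, List.map_ofFn, List.sum_take_ofFn]
  rfl

lemma posSteps_ofFn {m : ℕ} (s : Fin m → Bool) :
    posSteps (List.ofFn s) = #{i : Fin m | 0 < max
      (∑ l ∈ univ.filter (fun l : Fin m => l < i), (if s l then (1 : ℤ) else -1))
      (∑ l ∈ univ.filter (fun l : Fin m => l ≤ i), (if s l then (1 : ℤ) else -1))} := by
  rw [posSteps, card_filter, card_filter, List.length_ofFn, ← Fin.sum_univ_eq_sum_range]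
  refine sum_congr rfl fun i _ => ?_
  simp only [height_ofFn, Fin.lt_def, Fin.le_def, Nat.lt_succ_iff]
  rfl

end ChungFeller

/-- **Chung–Feller theorem.** A lattice path with `2n` steps is encoded by
`s : Fin (2n) → Bool` (`true` = up step `(1,1)`, `false` = down step `(1,-1)`).
A step `i` is above the x-axis when the larger of its two endpoint heights is
positive.  For each `r ∈ {0, …, n}`, the number of paths with `n` up steps
(hence ending at `(2n, 0)`) having exactly `2r` steps above the x-axis equals
the Catalan number `C_n = (1/(n+1))·binom(2n, n)`. -/
theorem stmt6 (n r : ℕ) (hr : r ≤ n) :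
    ((Finset.univ.filter (fun s : Fin (2 * n) → Bool =>
        (Finset.univ.filter (fun i => s i = true)).card = n ∧
        (Finset.univ.filter (fun i : Fin (2 * n) =>
          0 < max
            (∑ l ∈ Finset.univ.filter (fun l : Fin (2 * n) => l < i),
              (if s l then (1 : ℤ) else -1))
            (∑ l ∈ Finset.univ.filter (fun l : Fin (2 * n) => l ≤ i),
              (if s l then (1 : ℤ) else -1)))).card = 2 * r)).card : ℚ)
      = (Nat.choose (2 * n) n : ℚ) / (n + 1) := by
  have hcount := ChungFeller.countAbove_eq_catalan hr
  simp only [ChungFeller.countAbove_eq_card_ofFn, ChungFeller.isBalanced_ofFn_iff,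
    ChungFeller.posSteps_ofFn] at hcount
  rw [hcount, eq_div_iff (by positivity), ← Nat.centralBinom_eq_two_mul_choose,
    ← succ_mul_catalan_eq_centralBinom]
  push_cast
  ring
end

section
/- The number of lattice paths from (0,0) to (kn,0) consisting of (k−1)n up steps (1,1) and n down steps (1,1−k) with exactly r up steps below the x-axis is independent of r for r in {0,1,...,(k−1)n}, and equals the Fuss–Catalan number C_{n,k} = (1/(kn+1))·binom(kn+1,n). -/
/-!
Close a path up into a cyclic word of length `kn + 1` by adding one up step. With up steps of
weight `1` and down steps of weight `1 - k` the word has total weight `1`, so its periodically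
extended height function satisfies `H (x + kn + 1) = H x + 1`. Cutting the cycle just after an
up step `x` gives a path whose up steps below the axis are the up steps `y ∈ (x, x + kn + 1)`
with `H y ≤ H x`. Comparing the windows of two up steps of one period shows that these counts
are pairwise distinct; there are `(k - 1)n + 1` up steps and each count is at most `(k - 1)n`,
so every `r` is attained by exactly one cut. Hence the paths with `r` up steps below the axis,
paired with the `kn + 1` positions of the added step, correspond to the `binom(kn + 1, n)`
cyclic words.
-/

open Finset Function

namespace Huq

lemma card_filter_fin_add {N : ℕ} (p : ℕ → Prop) [DecidablePred p] (a : ℕ) :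
    #{i : Fin N | p (a + i)} = #{b ∈ Ico a (a + N) | p b} := by
  apply card_bij (fun (i : Fin N) _ => a + (i : ℕ))
  · intro i hi; simp at hi ⊢; omega
  · intro i _ j _ h; ext; simpa using h
  · intro b hb
    simp only [mem_filter, mem_Ico] at hb
    refine ⟨⟨b - a, by omega⟩, ?_, by simp; omega⟩
    simpa [show a + (b - a) = b by omega] using hb.2

lemma sum_filter_fin_lt {N : ℕ} {M : Type*} [AddCommMonoid M] (g : ℕ → M) (i : Fin N) :
    ∑ l ∈ {l | l < i}, g l = ∑ x ∈ range i, g x := by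
  rw [filter_gt_eq_Iio, ← Nat.Iio_eq_range, ← Fin.map_valEmbedding_Iio, sum_map]
  rfl

lemma card_filter_card_false_eq_choose {α : Type*} [Fintype α] [DecidableEq α] (n : ℕ) :
    #{f : α → Bool | #{i | f i = false} = n} = (Fintype.card α).choose n := by
  rw [← card_univ, ← card_powersetCard]
  refine card_nbij' (fun f => ({i | f i = false} : Finset α)) (fun A i => decide (i ∉ A))
    ?_ ?_ ?_ ?_
  · intro f hf
    simp_all [mem_powersetCard]
  · intro A hA
    simp_all [mem_powersetCard]
  · intro f _
    ext i
    simp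
  · intro A _
    ext i
    simp

section CycleLemma

variable (t : ℕ → Bool) (H : ℕ → ℤ) (m : ℕ)

def upsAtMost (a b : ℕ) (c : ℤ) : ℕ :=
  #{i ∈ Ico a b | t i ∧ H i ≤ c}

def rotatedUpsBelow (x : ℕ) : ℕ := upsAtMost t H (x + 1) (x + m) (H x)

lemma upsAtMost_add {a b d : ℕ} (c : ℤ) (hab : a ≤ b) (hbd : b ≤ d) :
    upsAtMost t H a d c = upsAtMost t H a b c + upsAtMost t H b d c := by
  rw [upsAtMost, ← Ico_union_Ico_eq_Ico hab hbd, filter_union,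
    card_union_of_disjoint (disjoint_filter_filter (Ico_disjoint_Ico_consecutive a b d))]
  rfl

lemma upsAtMost_mono (a b : ℕ) {c c' : ℤ} (h : c ≤ c') :
    upsAtMost t H a b c ≤ upsAtMost t H a b c' :=
  card_le_card <| monotone_filter_right _ fun _ _ hi => ⟨hi.1, hi.2.trans h⟩

lemma upsAtMost_succ_self (a : ℕ) (c : ℤ) :
    upsAtMost t H a (a + 1) c = if t a ∧ H a ≤ c then 1 else 0 := by
  rw [upsAtMost, Nat.Ico_succ_singleton, filter_singleton]
  split_ifs <;> rfl

variable {t H m} (ht : Periodic t m) (hH : ∀ i, H (i + m) = H i + 1)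
include ht hH

lemma upsAtMost_add_period (a b : ℕ) (c : ℤ) :
    upsAtMost t H (a + m) (b + m) c = upsAtMost t H a b (c - 1) := by
  refine card_nbij' (· - m) (· + m) ?_ ?_ ?_ ?_ <;> intro i hi <;>
    simp only [coe_filter, mem_Ico, Set.mem_ofPred_eq] at hi ⊢
  · obtain ⟨i, rfl⟩ : ∃ i', i = i' + m := ⟨i - m, by omega⟩
    rw [ht, hH] at hi
    rw [Nat.add_sub_cancel]
    exact ⟨⟨by omega, by omega⟩, hi.2.1, by linarith [hi.2.2]⟩
  · rw [ht, hH]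
    exact ⟨⟨by omega, by omega⟩, hi.2.1, by linarith [hi.2.2]⟩
  · omega
  · omega

lemma rotatedUpsBelow_add_period (x : ℕ) :
    rotatedUpsBelow t H m (x + m) = rotatedUpsBelow t H m x := by
  rw [rotatedUpsBelow, rotatedUpsBelow, add_right_comm, upsAtMost_add_period ht hH, hH,
    add_sub_cancel_right]

lemma rotatedUpsBelow_lt_of_le {x y : ℕ} (hxy : x < y) (hy : t y) (hyx : H y ≤ H x) :
    rotatedUpsBelow t H m y < rotatedUpsBelow t H m x := by
  have hm : 0 < m := Nat.pos_of_ne_zero fun h => by simpa [h] using hH 0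
  -- Count the up steps of `(x, y + m)` at height `≤ H y` by splitting at `y`, and at `x + m`.
  have e1 := upsAtMost_add t H (H y) (show x + 1 ≤ y by omega) (show y ≤ y + m by omega)
  have e2 := upsAtMost_add t H (H y) (show x + 1 ≤ x + m by omega) (show x + m ≤ y + m by omega)
  have e3 := upsAtMost_add t H (H y) (show y ≤ y + 1 by omega) (show y + 1 ≤ y + m by omega)
  have e4 := upsAtMost_add t H (H y - 1) (show x ≤ x + 1 by omega) (show x + 1 ≤ y by omega)
  rw [upsAtMost_add_period ht hH] at e2
  rw [upsAtMost_succ_self, if_pos ⟨hy, le_rfl⟩] at e3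
  rw [upsAtMost_succ_self, if_neg (by omega)] at e4
  have := upsAtMost_mono t H (x + 1) y (sub_le_self (H y) zero_le_one)
  have := upsAtMost_mono t H (x + 1) (x + m) hyx
  unfold rotatedUpsBelow
  omega

lemma rotatedUpsBelow_ne {x y : ℕ} (hx : t x) (hy : t y) (hxy : x < y) (hyx : y < x + m) :
    rotatedUpsBelow t H m x ≠ rotatedUpsBelow t H m y := by
  rcases le_or_gt (H y) (H x) with hle | hlt
  · exact (rotatedUpsBelow_lt_of_le ht hH hxy hy hle).ne'
  · rw [← rotatedUpsBelow_add_period ht hH x]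
    exact (rotatedUpsBelow_lt_of_le ht hH hyx (by rwa [ht]) (by rw [hH]; omega)).ne

lemma rotatedUpsBelow_lt_card {x : ℕ} (hx : t x) :
    rotatedUpsBelow t H m x < #{i ∈ range m | t i} := by
  have hm : 0 < m := Nat.pos_of_ne_zero fun h => by simpa [h] using hH 0
  have hsplit := upsAtMost_add t H (H x) (show x ≤ x + 1 by omega) (show x + 1 ≤ x + m by omega)
  rw [upsAtMost_succ_self, if_pos ⟨hx, le_rfl⟩] at hsplit
  have hle : upsAtMost t H x (x + m) (H x) ≤ #{i ∈ Ico x (x + m) | t i} :=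
    card_le_card <| monotone_filter_right _ fun _ _ hi => hi.1
  rw [Nat.filter_Ico_card_eq_of_periodic _ _ _ fun i => by rw [ht],
    Nat.count_eq_card_filter_range] at hle
  unfold rotatedUpsBelow
  omega

theorem rotatedUpsBelow_bijOn :
    Set.BijOn (rotatedUpsBelow t H m) ({i ∈ range m | t i} : Finset ℕ)
      (range #{i ∈ range m | t i}) := by
  have hmaps : Set.MapsTo (rotatedUpsBelow t H m) ({i ∈ range m | t i} : Finset ℕ)
      (range #{i ∈ range m | t i}) :=
    fun x hx => mem_range.2 (rotatedUpsBelow_lt_card ht hH (mem_filter.1 hx).2)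
  have hinj : Set.InjOn (rotatedUpsBelow t H m) ({i ∈ range m | t i} : Finset ℕ) := by
    intro x hx y hy hxy
    simp only [coe_filter, mem_range, Set.mem_ofPred_eq] at hx hy
    by_contra hne
    rcases Nat.lt_or_gt_of_ne hne with h | h
    · exact rotatedUpsBelow_ne ht hH hx.2 hy.2 h (by omega) hxy
    · exact rotatedUpsBelow_ne ht hH hy.2 hx.2 h (by omega) hxy.symm
  exact ⟨hmaps, hinj, surjOn_of_injOn_of_card_le _ hmaps hinj (by rw [card_range])⟩

end CycleLemma

section Rotation

variable {N : ℕ}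

def cyclicCut (τ : Fin (N + 1) → Bool) (j : Fin (N + 1)) : Fin N → Bool :=
  fun i => τ (j + i.succ)

def cyclicJoin (s : Fin N → Bool) (j : Fin (N + 1)) : Fin (N + 1) → Bool :=
  fun i => Fin.cons (α := fun _ => Bool) true s (i - j)

lemma cyclicJoin_self (s : Fin N → Bool) (j : Fin (N + 1)) : cyclicJoin s j j = true := by
  simp [cyclicJoin]

lemma cyclicCut_cyclicJoin (s : Fin N → Bool) (j : Fin (N + 1)) :
    cyclicCut (cyclicJoin s j) j = s := by
  ext i
  simp [cyclicCut, cyclicJoin]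

lemma cyclicJoin_cyclicCut {τ : Fin (N + 1) → Bool} {j : Fin (N + 1)} (hj : τ j) :
    cyclicJoin (cyclicCut τ j) j = τ := by
  ext i
  have h := congrFun (Fin.cons_self_tail fun d => τ (j + d)) (i - j)
  simp only [add_zero, hj, add_sub_cancel] at h
  exact h

lemma card_cyclicCut_eq_false {τ : Fin (N + 1) → Bool} {j : Fin (N + 1)} (hj : τ j) :
    #{i | cyclicCut τ j i = false} = #{i | τ i = false} := by
  rw [← card_equiv (Equiv.addLeft j) (s := {d | τ (j + d) = false}) (by simp),
    Fin.card_filter_univ_succ']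
  simp only [add_zero, hj, Bool.true_eq_false, if_false, zero_add, cyclicCut]
  congr

def periodicExt (τ : Fin (N + 1) → Bool) : ℕ → Bool := fun b => τ (Fin.ofNat (N + 1) b)

lemma periodic_periodicExt (τ : Fin (N + 1) → Bool) : Periodic (periodicExt τ) (N + 1) := by
  intro b
  simp only [periodicExt]
  congr 1
  ext
  simp

lemma periodicExt_val (τ : Fin (N + 1) → Bool) (i : Fin (N + 1)) : periodicExt τ i = τ i := by
  simp [periodicExt]

lemma periodicExt_add_succ (τ : Fin (N + 1) → Bool) (j : Fin (N + 1)) (i : Fin N) :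
    periodicExt τ (j + 1 + i) = cyclicCut τ j i := by
  rw [add_assoc, add_comm 1]
  rfl

lemma card_filter_range_periodicExt (τ : Fin (N + 1) → Bool) :
    #{i ∈ range (N + 1) | periodicExt τ i} = #{i | τ i} := by
  simpa [periodicExt_val, Nat.Ico_zero_eq_range] using
    (card_filter_fin_add (N := N + 1) (fun b => periodicExt τ b) 0).symm

end Rotation

def step (k : ℕ) (b : Bool) : ℤ := if b then 1 else 1 - k

lemma step_true (k : ℕ) : step k true = 1 := rfl

lemma sum_step (k : ℕ) {ι : Type*} (s : Finset ι) (f : ι → Bool) :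
    ∑ i ∈ s, step k (f i) = #s - k * #{i ∈ s | f i = false} := by
  have hcard := card_filter_add_card_filter_not (s := s) (fun i => f i = true)
  simp only [step, sum_ite, sum_const, nsmul_eq_mul, mul_one, Bool.not_eq_true] at hcard ⊢
  rw [← hcard]
  push_cast
  ring

def height (k : ℕ) (t : ℕ → Bool) (x : ℕ) : ℤ := ∑ i ∈ range x, step k (t i)

def upsBelow {N : ℕ} (k : ℕ) (s : Fin N → Bool) : ℕ :=
  #{i | s i ∧ ∑ l ∈ {l | l < i}, step k (s l) < 0}

lemma height_add_period {k m : ℕ} {t : ℕ → Bool} (ht : Periodic t m) (x : ℕ) :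
    height k t (x + m) = height k t x + height k t m := by
  rw [height, add_comm, sum_range_add, add_comm]
  exact congrArg (· + _) (sum_congr rfl fun i _ => by rw [add_comm, ht])

lemma height_periodicExt {k n : ℕ} {τ : Fin (k * n + 1) → Bool}
    (hτ : #{i | τ i = false} = n) : height k (periodicExt τ) (k * n + 1) = 1 := by
  rw [height, ← Fin.sum_univ_eq_sum_range (fun i => step k (periodicExt τ i))]
  simp only [periodicExt_val, sum_step, hτ, card_univ, Fintype.card_fin]
  push_cast
  ring

lemma upsBelow_cyclicCut (k : ℕ) {N : ℕ} {τ : Fin (N + 1) → Bool} {j : Fin (N + 1)}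
    (hj : τ j) :
    upsBelow k (cyclicCut τ j)
      = rotatedUpsBelow (periodicExt τ) (height k (periodicExt τ)) (N + 1) j := by
  have hprefix (i : Fin N) : ∑ l ∈ {l | l < i}, step k (cyclicCut τ j l)
      = height k (periodicExt τ) (j + 1 + i) - (height k (periodicExt τ) j + 1) := by
    rw [height, height, sum_range_add, sum_range_succ, periodicExt_val, hj,
      ← sum_filter_fin_lt (fun x => step k (periodicExt τ (j + 1 + x)))]
    simp only [periodicExt_add_succ, step_true]
    ring
  rw [upsBelow, rotatedUpsBelow, upsAtMost, show (j : ℕ) + (N + 1) = j + 1 + N by omega,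
    ← card_filter_fin_add]
  congr 1
  ext i
  simp only [mem_filter, mem_univ, true_and, hprefix, periodicExt_add_succ, sub_neg,
    Int.lt_add_one_iff]

lemma existsUnique_upsBelow_cyclicCut {k n r : ℕ} (hk : 1 ≤ k) (hr : r ≤ (k - 1) * n)
    {τ : Fin (k * n + 1) → Bool} (hτ : #{i | τ i = false} = n) :
    ∃! j, τ j ∧ upsBelow k (cyclicCut τ j) = r := by
  set t := periodicExt τ
  have ht := periodic_periodicExt τ
  have hbij := rotatedUpsBelow_bijOn ht (H := height k t) fun i => by
    rw [height_add_period ht, height_periodicExt hτ]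
  have hups : #{i ∈ range (k * n + 1) | t i} = (k - 1) * n + 1 := by
    have := card_filter_add_card_filter_not (s := univ) (fun i => τ i = true)
    simp only [Bool.not_eq_true, hτ, card_univ, Fintype.card_fin] at this
    rw [card_filter_range_periodicExt]
    have : n ≤ k * n := Nat.le_mul_of_pos_left n hk
    rw [Nat.sub_one_mul]
    omega
  have hmem (j : Fin (k * n + 1)) (hj : τ j) :
      (j : ℕ) ∈ (({i ∈ range (k * n + 1) | t i} : Finset ℕ) : Set ℕ) := by
    simp only [coe_filter, mem_range, Set.mem_ofPred_eq, t, periodicExt_val, hj, j.is_lt,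
      and_self]
  obtain ⟨i, hi, hir⟩ :=
    hbij.surjOn (show r ∈ (range _ : Finset ℕ) by rw [mem_range, hups]; omega)
  simp only [coe_filter, mem_range, Set.mem_ofPred_eq] at hi
  have hτi : τ ⟨i, hi.1⟩ := periodicExt_val τ ⟨i, hi.1⟩ ▸ hi.2
  refine ⟨⟨i, hi.1⟩, ⟨hτi, (upsBelow_cyclicCut k hτi).trans hir⟩, ?_⟩
  rintro j ⟨hj, hjr⟩
  rw [upsBelow_cyclicCut k hj] at hjr
  exact Fin.ext (hbij.injOn (hmem j hj) (hmem _ hτi) (hjr.trans hir.symm))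

lemma card_filter_upsBelow_cyclicCut_eq_mul (k n r : ℕ) {N : ℕ} :
    #{p : (Fin (N + 1) → Bool) × Fin (N + 1) |
        #{i | p.1 i = false} = n ∧ p.1 p.2 ∧ upsBelow k (cyclicCut p.1 p.2) = r}
      = #{s : Fin N → Bool | #{i | s i = false} = n ∧ upsBelow k s = r} * (N + 1) := by
  calc _ = #(({s | #{i | s i = false} = n ∧ upsBelow k s = r} : Finset (Fin N → Bool)) ×ˢ
        (univ : Finset (Fin (N + 1)))) := ?_
    _ = _ := by rw [card_product, card_univ, Fintype.card_fin]
  refine card_nbij' (fun p => (cyclicCut p.1 p.2, p.2)) (fun q => (cyclicJoin q.1 q.2, q.2))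
    ?_ ?_ ?_ ?_
  · rintro ⟨τ, j⟩ h
    simp only [coe_filter, mem_univ, true_and, Set.mem_ofPred_eq] at h
    simp [card_cyclicCut_eq_false h.2.1, h]
  · rintro ⟨s, j⟩ h
    simp only [coe_product, coe_filter, Set.mem_prod, Set.mem_ofPred_eq] at h
    simp only [coe_filter, Set.mem_ofPred_eq, cyclicJoin_self, cyclicCut_cyclicJoin, h, and_true,
      ← card_cyclicCut_eq_false (cyclicJoin_self s j), mem_univ]
  · rintro ⟨τ, j⟩ h
    simp only [coe_filter, mem_univ, true_and, Set.mem_ofPred_eq] at h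
    simp [cyclicJoin_cyclicCut h.2.1]
  · rintro ⟨s, j⟩ -
    simp [cyclicCut_cyclicJoin]

lemma card_filter_upsBelow_cyclicCut_eq_card {k n r : ℕ} (hk : 1 ≤ k) (hr : r ≤ (k - 1) * n) :
    #{p : (Fin (k * n + 1) → Bool) × Fin (k * n + 1) |
        #{i | p.1 i = false} = n ∧ p.1 p.2 ∧ upsBelow k (cyclicCut p.1 p.2) = r}
      = #{τ : Fin (k * n + 1) → Bool | #{i | τ i = false} = n} := by
  refine card_bij (fun p _ => p.1) (fun p hp => by simp_all) ?_ ?_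
  · rintro ⟨τ, j⟩ hp ⟨τ', j'⟩ hp' (rfl : τ = τ')
    simp only [mem_filter, mem_univ, true_and] at hp hp'
    rw [(existsUnique_upsBelow_cyclicCut hk hr hp.1).unique hp.2 hp'.2]
  · intro τ hτ
    simp only [mem_filter, mem_univ, true_and] at hτ
    obtain ⟨j, hj, -⟩ := existsUnique_upsBelow_cyclicCut hk hr hτ
    exact ⟨(τ, j), by simp [hτ, hj], rfl⟩

end Huq

open Huq

/-- **Huq's corollary.** A lattice path from `(0,0)` to `(kn, 0)` is encoded by
`s : Fin (k·n) → Bool` (`true` = up step `(1,1)`, `false` = down step `(1, 1-k)`)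
with exactly `n` down steps (hence `(k-1)n` up steps and the path ends at height `0`).
An up step is below the x-axis when its starting height is negative.
For each `r ∈ {0, 1, …, (k-1)n}`, the number of such paths with exactly `r` up
steps below the x-axis equals the Fuss–Catalan number
`C_{n,k} = (1/(kn+1))·binom(kn+1, n)` (in particular it is independent of `r`). -/
theorem stmt7 (k n : ℕ) (hk : 2 ≤ k) (r : ℕ) (hr : r ≤ (k - 1) * n) :
    ((Finset.univ.filter (fun s : Fin (k * n) → Bool =>
        (Finset.univ.filter (fun i => s i = false)).card = n ∧
        (Finset.univ.filter (fun i : Fin (k * n) => s i = true ∧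
          (∑ l ∈ Finset.univ.filter (fun l : Fin (k * n) => l < i),
            (if s l then (1 : ℤ) else 1 - (k : ℤ))) < 0)).card = r)).card : ℚ)
      = (Nat.choose (k * n + 1) n : ℚ) / (k * n + 1) := by
  have hcount : (#{s : Fin (k * n) → Bool | #{i | s i = false} = n ∧ upsBelow k s = r} : ℚ)
      * (k * n + 1) = (k * n + 1).choose n := by
    norm_cast
    rw [← card_filter_upsBelow_cyclicCut_eq_mul,
      card_filter_upsBelow_cyclicCut_eq_card (by omega) hr, card_filter_card_false_eq_choose,
      Fintype.card_fin]
  rw [eq_div_iff (by positivity)]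
  -- the inner count of the statement is `upsBelow k s` unfolded
  exact hcount
end

section
/- The k-continuant K_{k,n}(x_1,...,x_n), defined by K_{k,n} = x_1 x_2 ··· x_n for n < k and K_{k,n}(x_1,...,x_n) = K_{k,n−k}(x_1,...,x_{n−k}) + K_{k,n−1}(x_1,...,x_{n−1})·x_n for n ≥ k, equals the sum, over all ways of deleting any number of pairwise disjoint blocks of k consecutive variables from the product x_1 x_2 ··· x_n, of the resulting products. -/
/-- The `k`-continuant `K_{k,n}(x_1, …, x_n)` (variables zero-indexed: `x i` is
`x_{i+1}`): `K_{k,n} = x_1 ⋯ x_n` for `n < k` and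
`K_{k,n} = K_{k,n-k}(x_1, …, x_{n-k}) + K_{k,n-1}(x_1, …, x_{n-1})·x_n` for `n ≥ k`.
(The disjunct `k = 0` in the guard is only there to ensure termination; it is
irrelevant for `k ≥ 2`.) -/
def contK (k : ℕ) (x : ℕ → ℚ) : ℕ → ℚ := fun n =>
  if h : n < k ∨ k = 0 then ∏ i ∈ Finset.range n, x i
  else contK k x (n - k) + contK k x (n - 1) * x (n - 1)
termination_by n => n
decreasing_by all_goals omega

/-- `D ⊆ {0, …, n-1}` is a disjoint union of blocks of `k` consecutive indices. -/
def IsBlockUnionNat (k n : ℕ) (D : Finset ℕ) : Prop :=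
  ∃ T : Finset ℕ,
    (∀ t ∈ T, t + k ≤ n) ∧
    (∀ t ∈ T, ∀ t' ∈ T, t ≠ t' → t + k ≤ t' ∨ t' + k ≤ t) ∧
    D = T.biUnion (fun t => Finset.Ico t (t + k))

/-!
Split the deletions of `{0, …, n-1}` according to whether the last index `n - 1` is deleted.
If it is not, what remains is a deletion of `{0, …, n-2}` followed by the factor `x (n-1)`;
if it is, it lies in a deleted block, which must be the final block `[n-k, n)`, and removing
that block leaves an arbitrary deletion of `{0, …, n-k-1}`. These are exactly the two terms of
the recursion defining `contK`.
-/

open Finset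

namespace IsBlockUnionNat

variable {k m n : ℕ} {D : Finset ℕ}

theorem subset_range (h : IsBlockUnionNat k n D) : D ⊆ range n := by
  obtain ⟨T, hT, -, rfl⟩ := h
  intro a ha
  obtain ⟨t, ht, hat⟩ := mem_biUnion.1 ha
  have := hT t ht
  rw [mem_Ico] at hat
  rw [mem_range]
  omega

theorem mono (h : IsBlockUnionNat k m D) (hmn : m ≤ n) : IsBlockUnionNat k n D := by
  obtain ⟨T, hT, hdisj, hD⟩ := h
  exact ⟨T, fun t ht => (hT t ht).trans hmn, hdisj, hD⟩

theorem of_succ_of_notMem (hk : 0 < k) (h : IsBlockUnionNat k (m + 1) D) (hm : m ∉ D) :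
    IsBlockUnionNat k m D := by
  obtain ⟨T, hT, hdisj, hD⟩ := h
  refine ⟨T, fun t ht => ?_, hdisj, hD⟩
  by_contra hlt
  have := hT t ht
  exact hm (hD ▸ mem_biUnion.2 ⟨t, ht, mem_Ico.2 ⟨by omega, by omega⟩⟩)

theorem union_Ico (h : IsBlockUnionNat k m D) :
    IsBlockUnionNat k (m + k) (D ∪ Ico m (m + k)) := by
  obtain ⟨T, hT, hdisj, rfl⟩ := h
  refine ⟨insert m T, ?_, ?_, by rw [biUnion_insert, union_comm]⟩
  · intro t ht
    rcases mem_insert.1 ht with rfl | ht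
    · rfl
    · have := hT t ht
      omega
  · intro t ht t' ht' hne
    rw [mem_insert] at ht ht'
    rcases ht with rfl | htT <;> rcases ht' with rfl | ht'T
    · exact absurd rfl hne
    · exact Or.inr (hT t' ht'T)
    · exact Or.inl (hT t htT)
    · exact hdisj t htT t' ht'T hne

theorem Ico_subset_and_sdiff (hk : 0 < k) (h : IsBlockUnionNat k (m + k) D)
    (hlast : m + k - 1 ∈ D) :
    Ico m (m + k) ⊆ D ∧ IsBlockUnionNat k m (D \ Ico m (m + k)) := by
  obtain ⟨T, hT, hdisj, rfl⟩ := h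
  obtain ⟨t, ht, htlast⟩ := mem_biUnion.1 hlast
  have hmT : m ∈ T := by
    have := hT t ht
    rw [mem_Ico] at htlast
    obtain rfl : t = m := by omega
    exact ht
  have hbefore : ∀ t ∈ T.erase m, t + k ≤ m := fun t ht => by
    obtain ⟨hne, ht⟩ := mem_erase.1 ht
    have := hT t ht
    rcases hdisj t ht m hmT hne with h | h <;> omega
  have hsplit : T.biUnion (fun t => Ico t (t + k))
      = Ico m (m + k) ∪ (T.erase m).biUnion (fun t => Ico t (t + k)) := by
    conv_lhs => rw [← insert_erase hmT]
    exact biUnion_insert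
  have hdisjoint : Disjoint (Ico m (m + k)) ((T.erase m).biUnion (fun t => Ico t (t + k))) := by
    refine disjoint_left.2 fun a ha ha' => ?_
    obtain ⟨t, ht, hat⟩ := mem_biUnion.1 ha'
    have := hbefore t ht
    rw [mem_Ico] at ha hat
    omega
  refine ⟨hsplit ▸ subset_union_left, ?_⟩
  rw [hsplit, union_sdiff_cancel_left hdisjoint]
  exact ⟨T.erase m, hbefore,
    fun t ht t' ht' => hdisj t (mem_of_mem_erase ht) t' (mem_of_mem_erase ht'), rfl⟩

theorem iff_eq_empty (h : n < k ∨ k = 0) : IsBlockUnionNat k n D ↔ D = ∅ := by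
  constructor
  · rintro ⟨T, hT, -, rfl⟩
    rcases h with h | rfl
    · have hT : T = ∅ := eq_empty_of_forall_notMem fun t ht => by
        have := hT t ht
        omega
      simp [hT]
    · ext
      simp
  · rintro rfl
    exact ⟨∅, by simp, by simp, by simp⟩

end IsBlockUnionNat

open Classical in
noncomputable def blockUnions (k n : ℕ) : Finset (Finset ℕ) :=
  (range n).powerset.filter (IsBlockUnionNat k n)

theorem mem_blockUnions {k n : ℕ} {D : Finset ℕ} :
    D ∈ blockUnions k n ↔ IsBlockUnionNat k n D := by
  simp only [blockUnions, mem_filter, mem_powerset, and_iff_right_iff_imp]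
  exact IsBlockUnionNat.subset_range

noncomputable def blockDeletionSum (k : ℕ) (x : ℕ → ℚ) (n : ℕ) : ℚ :=
  ∑ D ∈ blockUnions k n, ∏ i ∈ range n \ D, x i

section blockDeletionSum

variable {k n : ℕ} (x : ℕ → ℚ)

theorem blockDeletionSum_of_lt (h : n < k ∨ k = 0) :
    blockDeletionSum k x n = ∏ i ∈ range n, x i := by
  have : blockUnions k n = {∅} := by
    ext D
    rw [mem_blockUnions, IsBlockUnionNat.iff_eq_empty h, mem_singleton]
  simp [blockDeletionSum, this]

theorem sum_filter_notMem_blockUnions (hk : 0 < k) (hn : 0 < n) :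
    ∑ D ∈ (blockUnions k n).filter (fun D => n - 1 ∉ D), ∏ i ∈ range n \ D, x i
      = blockDeletionSum k x (n - 1) * x (n - 1) := by
  obtain ⟨p, rfl⟩ : ∃ p, n = p + 1 := ⟨n - 1, by omega⟩
  have hfilter : (blockUnions k (p + 1)).filter (fun D => p ∉ D) = blockUnions k p := by
    ext D
    simp only [mem_filter, mem_blockUnions]
    refine ⟨fun ⟨hD, hp⟩ => hD.of_succ_of_notMem hk hp, fun hD => ⟨hD.mono p.le_succ, ?_⟩⟩
    exact fun hp => by simpa using hD.subset_range hp
  simp only [Nat.add_sub_cancel, hfilter, blockDeletionSum, sum_mul]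
  refine sum_congr rfl fun D hD => ?_
  have hp : p ∉ D := fun hp => by simpa using (mem_blockUnions.1 hD).subset_range hp
  rw [range_add_one, insert_sdiff_of_notMem _ hp, prod_insert (by simp), mul_comm]

theorem sum_filter_mem_blockUnions (hk : 0 < k) (m : ℕ) :
    ∑ D ∈ (blockUnions k (m + k)).filter (fun D => m + k - 1 ∈ D), ∏ i ∈ range (m + k) \ D, x i
      = blockDeletionSum k x m := by
  have hdisjoint : ∀ D ∈ blockUnions k m, Disjoint D (Ico m (m + k)) := fun D hD =>
    disjoint_left.2 fun a ha ha' => by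
      have := mem_range.1 ((mem_blockUnions.1 hD).subset_range ha)
      rw [mem_Ico] at ha'
      omega
  have himage : (blockUnions k (m + k)).filter (fun D => m + k - 1 ∈ D)
      = (blockUnions k m).image (· ∪ Ico m (m + k)) := by
    ext D
    simp only [mem_filter, mem_image, mem_blockUnions]
    constructor
    · rintro ⟨hD, hlast⟩
      obtain ⟨hsub, hrest⟩ := hD.Ico_subset_and_sdiff hk hlast
      exact ⟨D \ Ico m (m + k), hrest, sdiff_union_of_subset hsub⟩
    · rintro ⟨D, hD, rfl⟩
      exact ⟨hD.union_Ico, mem_union_right _ (mem_Ico.2 ⟨by omega, by omega⟩)⟩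
  rw [himage, sum_image fun D hD D' hD' heq => by
    rw [← union_sdiff_cancel_right (hdisjoint D hD), heq,
      union_sdiff_cancel_right (hdisjoint D' hD')]]
  refine sum_congr rfl fun D _ => prod_congr ?_ fun _ _ => rfl
  ext a
  simp only [mem_sdiff, mem_range, mem_union, mem_Ico]
  grind

theorem blockDeletionSum_eq_add_mul (hk : 0 < k) (hn : k ≤ n) :
    blockDeletionSum k x n =
      blockDeletionSum k x (n - k) + blockDeletionSum k x (n - 1) * x (n - 1) := by
  obtain ⟨m, rfl⟩ : ∃ m, n = m + k := ⟨n - k, by omega⟩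
  rw [blockDeletionSum, ← sum_filter_add_sum_filter_not _ (fun D => m + k - 1 ∈ D),
    sum_filter_mem_blockUnions x hk, sum_filter_notMem_blockUnions x hk (by omega),
    Nat.add_sub_cancel]

end blockDeletionSum

open Classical in
theorem stmt12_general (k : ℕ) (x : ℕ → ℚ) (n : ℕ) :
    contK k x n =
      ∑ D ∈ (Finset.range n).powerset.filter (fun D => IsBlockUnionNat k n D),
        ∏ i ∈ Finset.range n \ D, x i := by
  change contK k x n = blockDeletionSum k x n
  induction n using Nat.strong_induction_on with
  | _ n ih =>
    rw [contK]
    split_ifs with h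
    · exact (blockDeletionSum_of_lt x h).symm
    · rw [blockDeletionSum_eq_add_mul x (by omega) (by omega), ih _ (by omega), ih _ (by omega)]

open Classical in
/-- The `k`-continuant `K_{k,n}(x_1, …, x_n)` equals the sum, over all ways of
deleting pairwise disjoint blocks of `k` consecutive variables from the product
`x_1 x_2 ⋯ x_n`, of the resulting products (deleting nothing gives `x_1 ⋯ x_n`). -/
theorem stmt12 (k : ℕ) (hk : 2 ≤ k) (x : ℕ → ℚ) (n : ℕ) :
    contK k x n =
      ∑ D ∈ (Finset.range n).powerset.filter (fun D => IsBlockUnionNat k n D),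
        ∏ i ∈ Finset.range n \ D, x i :=
  stmt12_general k x n
end

section
/- Every plane 0-1-2 tree on n vertices has exactly one levelwise numbering by the labels 1,...,n. -/
/-- Plane 0-1-2 trees: either empty, or a root with a (possibly empty) left subtree
and a (possibly empty) right subtree. -/
inductive PTree : Type
  | nil : PTree
  | node : PTree → PTree → PTree

/-- The set of vertices of a plane 0-1-2 tree, encoded as root-to-vertex direction
lists (`false` = step to the left child, `true` = step to the right child). -/
def PTree.positions : PTree → Finset (List Bool)
  | .nil => ∅
  | .node l r =>
      insert [] ((l.positions.image (List.cons false)) ∪ (r.positions.image (List.cons true)))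

/-- The level of a vertex: the number of right steps on the path from the root. -/
def PTree.level (p : List Bool) : ℕ := p.count true

/-!
Order the vertices by level and, within a level, lexicographically with a right step before a
left step. Every instance of rules (1)–(3) is increasing for this order. Conversely, any two
distinct vertices are compared by one of the rules: at the same level, either one lies in the
left subtree of the other, or the two split at a common ancestor, whose level is smaller, so its
label is smaller by (1) and rule (3) applies. Hence a numbering is levelwise iff it is strictly
increasing for this total order, and the only such bijection onto `Fin n` is the rank.
-/

theorem Function.Injective.existsUnique_fin_rank {α β : Type*} [Fintype α] [LinearOrder β]
    {key : α → β} (hkey : Function.Injective key) {n : ℕ} (hn : Fintype.card α = n) :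
    ∃! f : α → Fin n, Function.Bijective f ∧ ∀ a b, key a < key b → f a < f b := by
  let : LinearOrder α := LinearOrder.lift' key hkey
  let e := (Fintype.orderIsoFinOfCardEq α hn).symm
  refine ⟨e, ⟨e.bijective, fun a b h => e.strictMono h⟩, fun f ⟨hf, hmono⟩ => ?_⟩
  refine (StrictMono.range_inj (fun a b h => hmono a b h) e.strictMono).1 ?_
  rw [hf.2.range_eq, e.surjective.range_eq]

theorem List.exists_of_map_not_lt : ∀ {p q : List Bool}, p.map not < q.map not →
    (∃ b, p ++ [b] <+: q) ∨ ∃ w, w ++ [true] <+: p ∧ w ++ [false] <+: q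
  | [], b :: q, _ => Or.inl ⟨b, by simp⟩
  | a :: p, b :: q, h => by
    rcases List.cons_lt_cons_iff.1 h with hab | ⟨hab, htail⟩
    · obtain ⟨rfl, rfl⟩ : a = true ∧ b = false := by revert hab; cases a <;> cases b <;> decide
      exact Or.inr ⟨[], by simp, by simp⟩
    · obtain rfl : a = b := by simpa using hab
      rcases exists_of_map_not_lt htail with ⟨c, hc⟩ | ⟨w, hp, hq⟩
      · exact Or.inl ⟨c, by simpa using hc⟩
      · exact Or.inr ⟨a :: w, by simpa using hp, by simpa using hq⟩

namespace PTree

@[simp]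
theorem cons_mem_positions_node {b : Bool} {p : List Bool} {l r : PTree} :
    b :: p ∈ (node l r).positions ↔ p ∈ (cond b r l).positions := by
  cases b <;> simp [positions]

theorem mem_positions_of_prefix : ∀ {t : PTree} {p q : List Bool},
    q <+: p → p ∈ t.positions → q ∈ t.positions
  | nil, _, _, _, hp => by simp [positions] at hp
  | node _ _, _, [], _, _ => by simp [positions]
  | node _ _, a :: p, b :: q, hqp, hp => by
    obtain ⟨rfl, htail⟩ := List.cons_prefix_cons.1 hqp
    exact cons_mem_positions_node.2 (mem_positions_of_prefix htail (cons_mem_positions_node.1 hp))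

/-- Within a level, a right step sorts before a left step, hence `not`. -/
def levelKey (p : List Bool) : ℕ ×ₗ List Bool := toLex (level p, p.map not)

theorem levelKey_injective : Function.Injective levelKey := fun _ _ h =>
  (List.map_inj_right fun _ _ => Bool.not_inj).1 (congrArg (fun x => (ofLex x).2) h)

theorem level_le_of_prefix {p q : List Bool} (h : p <+: q) : level p ≤ level q :=
  h.sublist.count_le true

theorem level_lt_of_append_true_prefix {w p : List Bool} (h : w ++ [true] <+: p) :
    level w < level p :=
  lt_of_lt_of_le (by simp [level]) (level_le_of_prefix h)

theorem levelKey_lt_iff {p q : List Bool} :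
    levelKey p < levelKey q ↔ level p < level q ∨
      level p = level q ∧ (p ++ [false] <+: q ∨ ∃ w, w ++ [true] <+: p ∧ w ++ [false] <+: q) := by
  refine Prod.Lex.toLex_lt_toLex.trans (or_congr_right (and_congr_right fun hlev => ⟨?_, ?_⟩))
  · intro h
    rcases List.exists_of_map_not_lt h with ⟨b, hb⟩ | hw
    · cases b
      · exact Or.inl hb
      · exact absurd hlev (level_lt_of_append_true_prefix hb).ne
    · exact Or.inr hw
  · rintro (⟨r, rfl⟩ | ⟨w, ⟨r₁, rfl⟩, ⟨r₂, rfl⟩⟩)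
    · simpa using List.append_left_lt (l₁ := p.map not) (List.nil_lt_cons true (r.map not))
    · simpa using List.append_left_lt (l₁ := w.map not)
        (List.cons_lt_cons_iff.2 (Or.inl (by decide : false < true)) :
          false :: r₁.map not < true :: r₂.map not)

def IsLevelwise {γ : Type*} [LT γ] (t : PTree) (f : {p : List Bool // p ∈ t.positions} → γ) :
    Prop :=
  (∀ p q, level p.1 < level q.1 → f p < f q) ∧
  (∀ p q, (p.1 ++ [false]) <+: q.1 → f p < f q) ∧
  (∀ p q w, level p.1 = level q.1 → f w < f p → f w < f q →
    (w.1 ++ [true]) <+: p.1 → (w.1 ++ [false]) <+: q.1 → f p < f q)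

theorem isLevelwise_iff {γ : Type*} [LT γ] {t : PTree}
    {f : {p : List Bool // p ∈ t.positions} → γ} :
    t.IsLevelwise f ↔ ∀ p q, levelKey p.1 < levelKey q.1 → f p < f q := by
  constructor
  · rintro ⟨hlevel, hleft, hright⟩ p q hpq
    rcases levelKey_lt_iff.1 hpq with hlt | ⟨hlev, hpre | ⟨w, hwp, hwq⟩⟩
    · exact hlevel p q hlt
    · exact hleft p q hpre
    · let v : {p // p ∈ t.positions} := ⟨w, mem_positions_of_prefix
        (List.prefix_append w [true] |>.trans hwp) p.2⟩
      have hwp_level : level w < level p.1 := level_lt_of_append_true_prefix hwp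
      exact hright p q v hlev (hlevel v p hwp_level) (hlevel v q (hlev ▸ hwp_level)) hwp hwq
  · intro h
    refine ⟨fun p q hlt => h p q (levelKey_lt_iff.2 (Or.inl hlt)), fun p q hpre => ?_,
      fun p q w hlev _ _ hwp hwq => h p q (levelKey_lt_iff.2 (Or.inr ⟨hlev, Or.inr ⟨w, hwp, hwq⟩⟩))⟩
    rcases (level_le_of_prefix ((List.prefix_append _ _).trans hpre)).lt_or_eq with hlt | heq
    · exact h p q (levelKey_lt_iff.2 (Or.inl hlt))
    · exact h p q (levelKey_lt_iff.2 (Or.inr ⟨heq, Or.inl hpre⟩))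

end PTree

/-- Every plane 0-1-2 tree on `n` vertices has exactly one levelwise numbering:
a bijective labeling `f` of its vertices by `Fin n` (equivalently by `1, …, n`)
such that (1) vertices at smaller level get smaller labels; (2) a vertex in the
left subtree of a vertex `p` gets a label larger than that of `p`; (3) if two
vertices `p, q` at the same level lie respectively in the right and in the left
subtree of a vertex `w` whose label is smaller than both of theirs, then the
label of `p` is smaller than the label of `q`. -/
theorem stmt15 (t : PTree) :
    ∃! f : {p : List Bool // p ∈ t.positions} → Fin t.positions.card,
      Function.Bijective f ∧
      (∀ p q, PTree.level p.1 < PTree.level q.1 → f p < f q) ∧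
      (∀ p q, (p.1 ++ [false]) <+: q.1 → f p < f q) ∧
      (∀ p q w, PTree.level p.1 = PTree.level q.1 → f w < f p → f w < f q →
        (w.1 ++ [true]) <+: p.1 → (w.1 ++ [false]) <+: q.1 → f p < f q) := by
  refine (existsUnique_congr fun f => and_congr_right fun _ => PTree.isLevelwise_iff).2 ?_
  exact (PTree.levelKey_injective.comp Subtype.val_injective).existsUnique_fin_rank
    (Fintype.card_coe _)
end

section
/- The map sending each k-Catalan path P of order n to its induced short k-Catalan–Spitzer permutation (label the up steps so labels increase right-to-left within each level and increase with level, then record the labels in path order) is injective. -/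
/-!
Up steps with consecutive labels `c` and `c + 1` are either at the same level (the second one
to the left of the first) or one level apart (the second one to the right): otherwise the path
would cross an intermediate level by an up step whose label lies strictly between them, since
down steps never go up. By induction on the label, the word therefore determines the level of
the `c`-th up step. That level is `k c - (k - 1) p`, where `p` is the position of the step, so
for `k ≥ 2` the word determines the positions of all up steps, hence the path.
-/

/-- Height after the first `i` steps (`true` = up `(1,1)`, `false` = down `(1,1-k)`). -/
def pathHeight (k : ℕ) {m : ℕ} (s : Fin m → Bool) (i : ℕ) : ℤ :=
  ∑ t ∈ Finset.univ.filter (fun t : Fin m => (t : ℕ) < i),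
    (if s t then 1 else 1 - (k : ℤ))

/-- The (0-based) label of the up step `i` of the path `s`: up steps are numbered
so that labels increase right-to-left within each level (the level of an up step
being the height of its lower endpoint) and increase with the level.  Thus the
label of `i` is the number of up steps `j` whose level is smaller, or whose level
equals that of `i` and which lie further right. -/
def upLabel (k : ℕ) {m : ℕ} (s : Fin m → Bool) (i : Fin m) : ℕ :=
  (Finset.univ.filter (fun j : Fin m => s j = true ∧
    (pathHeight k s j < pathHeight k s i ∨
      (pathHeight k s j = pathHeight k s i ∧ i < j)))).card

/-- The short `k`-Catalan–Spitzer permutation induced by the path `s`: the sequence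
of labels of the up steps, read in path order. -/
def inducedWord (k : ℕ) {m : ℕ} (s : Fin m → Bool) : List ℕ :=
  ((List.finRange m).filter (fun i => s i = true)).map (upLabel k s)

open Finset

namespace Finset

variable {α β : Type*} [LinearOrder β] {S : Finset α} {f : α → β}

theorem card_filter_lt_lt_card_filter_lt_iff {i j : α} (hj : j ∈ S) :
    #{x ∈ S | f x < f j} < #{x ∈ S | f x < f i} ↔ f j < f i := by
  constructor
  · intro h
    by_contra! hij
    exact h.not_ge (card_le_card fun x hx => by
      simp only [mem_filter] at hx ⊢
      exact ⟨hx.1, hx.2.trans_le hij⟩)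
  · intro hji
    refine card_lt_card ⟨fun x hx => ?_, fun hsub => ?_⟩
    · simp only [mem_filter] at hx ⊢
      exact ⟨hx.1, hx.2.trans hji⟩
    · simpa using hsub (mem_filter.mpr ⟨hj, hji⟩)

theorem image_card_filter_lt (hf : Set.InjOn f S) :
    S.image (fun i => #{x ∈ S | f x < f i}) = range #S := by
  refine eq_of_subset_of_card_le (fun r hr => ?_) ?_
  · obtain ⟨i, hi, rfl⟩ := mem_image.mp hr
    exact mem_range.mpr (card_lt_card (filter_ssubset.mpr ⟨i, hi, lt_irrefl _⟩))
  · rw [card_range, card_image_of_injOn]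
    intro i hi j hj hij
    refine hf hi hj (le_antisymm (not_lt.mp fun hji => ?_) (not_lt.mp fun hij' => ?_))
    · exact ((card_filter_lt_lt_card_filter_lt_iff hj).mpr hji).ne' hij
    · exact ((card_filter_lt_lt_card_filter_lt_iff hi).mpr hij').ne hij

theorem card_filter_lt_orderEmbOfFin [LinearOrder α] (S : Finset α) {N : ℕ} (h : #S = N)
    (c : Fin N) : #{x ∈ S | x < S.orderEmbOfFin h c} = c := by
  have : {x ∈ S | x < S.orderEmbOfFin h c} = (Iio c).map (S.orderEmbOfFin h).toEmbedding := by
    ext x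
    simp only [mem_filter, mem_map, mem_Iio, RelEmbedding.coe_toEmbedding]
    constructor
    · rintro ⟨hx, hxc⟩
      obtain ⟨d, rfl⟩ : x ∈ Set.range (S.orderEmbOfFin h) := by
        rwa [range_orderEmbOfFin]
      exact ⟨d, (S.orderEmbOfFin h).lt_iff_lt.mp hxc, rfl⟩
    · rintro ⟨d, hd, rfl⟩
      exact ⟨orderEmbOfFin_mem S h d, (S.orderEmbOfFin h).lt_iff_lt.mpr hd⟩
  rw [this, card_map, Fin.card_Iio]

end Finset

section Path

variable {k m : ℕ} {s : Fin m → Bool}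

def upSteps (s : Fin m → Bool) : Finset (Fin m) := {i | s i = true}

@[simp]
theorem mem_upSteps {i : Fin m} : i ∈ upSteps s ↔ s i = true := by
  simp [upSteps]

theorem pathHeight_zero (k : ℕ) (s : Fin m → Bool) : pathHeight k s 0 = 0 := by
  simp [pathHeight]

theorem pathHeight_succ (k : ℕ) (s : Fin m → Bool) {a : ℕ} (ha : a < m) :
    pathHeight k s (a + 1) = pathHeight k s a + if s ⟨a, ha⟩ then 1 else 1 - (k : ℤ) := by
  have : univ.filter (fun t : Fin m => (t : ℕ) < a + 1) =
      insert ⟨a, ha⟩ (univ.filter fun t : Fin m => (t : ℕ) < a) := by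
    ext t
    simp only [mem_filter, mem_univ, true_and, mem_insert, Fin.ext_iff]
    omega
  rw [pathHeight, this, sum_insert (by simp), add_comm]
  rfl

theorem pathHeight_eq (k : ℕ) (s : Fin m → Bool) (p : Fin m) :
    pathHeight k s p = k * #{t ∈ upSteps s | t < p} - (k - 1) * (p : ℕ) := by
  have hstep (t : Fin m) :
      (if s t then (1 : ℤ) else 1 - k) = (1 - k) + if s t then (k : ℤ) else 0 := by
    cases s t <;> simp
  have hups : {t ∈ upSteps s | t < p} = {t ∈ Iio p | s t = true} := by
    ext t
    simp [upSteps, and_comm]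
  simp only [pathHeight, Fin.val_fin_lt, hstep, sum_add_distrib, sum_const, sum_ite,
    filter_gt_eq_Iio, Fin.card_Iio, hups, nsmul_eq_mul, smul_zero]
  ring

/-- Since down steps do not go up, the last time before `a` that the path is at most `g` is
followed by an up step, which starts at level exactly `g`. -/
theorem exists_up_of_lt_pathHeight (hk : 1 ≤ k) {g : ℤ} (hg : 0 ≤ g) {a : ℕ} (ha : a ≤ m)
    (h : g < pathHeight k s a) :
    ∃ u : Fin m, (u : ℕ) < a ∧ s u = true ∧ pathHeight k s u = g := by
  induction a with
  | zero => rw [pathHeight_zero] at h; omega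
  | succ a ih =>
    by_cases hga : g < pathHeight k s a
    · obtain ⟨u, hua, hu⟩ := ih (by omega) hga
      exact ⟨u, by omega, hu⟩
    · have hk' : (1 : ℤ) ≤ k := by exact_mod_cast hk
      have hsucc := pathHeight_succ k s (a := a) (by omega)
      cases hsa : s ⟨a, by omega⟩ <;> simp only [hsa, Bool.false_eq_true, ↓reduceIte] at hsucc
      · omega
      · exact ⟨⟨a, by omega⟩, Nat.lt_succ_self a, hsa, by show pathHeight k s a = g; omega⟩

def levelKey (k : ℕ) (s : Fin m → Bool) (i : Fin m) : ℤ ×ₗ (Fin m)ᵒᵈ :=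
  toLex (pathHeight k s i, OrderDual.toDual i)

theorem levelKey_lt_levelKey_iff {i j : Fin m} :
    levelKey k s j < levelKey k s i ↔
      pathHeight k s j < pathHeight k s i ∨ pathHeight k s j = pathHeight k s i ∧ i < j := by
  simp [levelKey, Prod.Lex.toLex_lt_toLex]

theorem levelKey_injective : Function.Injective (levelKey k s) := fun i j h => by
  simpa [levelKey] using congrArg (fun x => (ofLex x).2) h

theorem upLabel_eq_card (i : Fin m) :
    upLabel k s i = #{j ∈ upSteps s | levelKey k s j < levelKey k s i} := by
  unfold upLabel upSteps
  rw [filter_filter]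
  congr 1
  exact filter_congr fun j _ => by rw [levelKey_lt_levelKey_iff]

theorem upLabel_lt_upLabel_iff {i j : Fin m} (hj : s j = true) :
    upLabel k s j < upLabel k s i ↔ levelKey k s j < levelKey k s i := by
  rw [upLabel_eq_card, upLabel_eq_card]
  exact card_filter_lt_lt_card_filter_lt_iff (mem_upSteps.mpr hj)

theorem image_upLabel : (upSteps s).image (upLabel k s) = range #(upSteps s) := by
  rw [show upLabel k s = _ from funext upLabel_eq_card]
  exact image_card_filter_lt levelKey_injective.injOn

theorem exists_upLabel_eq {i : Fin m} (hi : s i = true) {ℓ : ℕ} (h : upLabel k s i = ℓ + 1) :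
    ∃ j, s j = true ∧ upLabel k s j = ℓ := by
  have hi' : upLabel k s i ∈ (upSteps s).image (upLabel k s) :=
    mem_image_of_mem _ (mem_upSteps.mpr hi)
  have hℓ : ℓ ∈ (upSteps s).image (upLabel k s) := by
    rw [image_upLabel, mem_range] at hi' ⊢
    omega
  obtain ⟨j, hj, rfl⟩ := mem_image.mp hℓ
  exact ⟨j, mem_upSteps.mp hj, rfl⟩

theorem pathHeight_eq_zero_of_upLabel_eq_zero (hk : 1 ≤ k) {i : Fin m}
    (hi0 : 0 ≤ pathHeight k s i) (h : upLabel k s i = 0) : pathHeight k s i = 0 := by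
  by_contra hne
  obtain ⟨u, -, hu, hu0⟩ := exists_up_of_lt_pathHeight (s := s) hk le_rfl i.isLt.le (by omega)
  have := (upLabel_lt_upLabel_iff (k := k) (i := i) hu).mpr
    (levelKey_lt_levelKey_iff.mpr (Or.inl (by omega)))
  omega

theorem pathHeight_eq_of_upLabel_eq_succ (hk : 1 ≤ k) {i j : Fin m} (hi : s i = true)
    (hi0 : 0 ≤ pathHeight k s i) (h : upLabel k s j = upLabel k s i + 1) :
    pathHeight k s j = pathHeight k s i + if i < j then 1 else 0 := by
  have hkey :=
    levelKey_lt_levelKey_iff.mp ((upLabel_lt_upLabel_iff (k := k) (i := j) hi).mp (by omega))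
  have hgap : ∀ u, s u = true → levelKey k s i < levelKey k s u →
      levelKey k s u < levelKey k s j → False := fun u hu hiu huj => by
    have := (upLabel_lt_upLabel_iff hi).mpr hiu
    have := (upLabel_lt_upLabel_iff hu).mpr huj
    omega
  split_ifs with hij
  · have hlt : pathHeight k s i < pathHeight k s j := by
      rcases hkey with hlt | ⟨-, hji⟩
      · exact hlt
      · exact absurd hij hji.not_gt
    by_contra hne
    obtain ⟨u, -, hu, hul⟩ := exists_up_of_lt_pathHeight (s := s) hk (g := pathHeight k s i + 1)
      (by omega) j.isLt.le (by omega)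
    exact hgap u hu (levelKey_lt_levelKey_iff.mpr (Or.inl (by omega)))
      (levelKey_lt_levelKey_iff.mpr (Or.inl (by omega)))
  · rcases hkey with hlt | ⟨heq, -⟩
    · exfalso
      obtain ⟨u, huj, hu, hul⟩ := exists_up_of_lt_pathHeight hk hi0 j.isLt.le hlt
      have hui : u < i := (Fin.lt_def.mpr huj).trans_le (not_lt.mp hij)
      exact hgap u hu (levelKey_lt_levelKey_iff.mpr (Or.inr ⟨hul.symm, hui⟩))
        (levelKey_lt_levelKey_iff.mpr (Or.inl (by omega)))
    · omega

theorem pathHeight_orderEmbOfFin {N : ℕ} (h : #(upSteps s) = N) (c : Fin N) :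
    pathHeight k s ((upSteps s).orderEmbOfFin h c) =
      k * (c : ℕ) - (k - 1) * ((upSteps s).orderEmbOfFin h c : ℕ) := by
  rw [pathHeight_eq, card_filter_lt_orderEmbOfFin]

theorem inducedWord_eq_ofFn (k : ℕ) (s : Fin m → Bool) {N : ℕ} (h : #(upSteps s) = N) :
    inducedWord k s = List.ofFn fun c => upLabel k s ((upSteps s).orderEmbOfFin h c) := by
  subst h
  have hsort : (List.finRange m).filter (fun i => s i = true) = (upSteps s).sort :=
    List.SortedLT.eq_of_mem_iff
      (List.sortedLT_iff_pairwise.mpr ((List.pairwise_lt_finRange m).filter _))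
      (upSteps s).sortedLT_sort (by simp)
  rw [inducedWord, hsort, ← listMap_orderEmbOfFin_finRange (upSteps s) rfl, List.map_map,
    List.ofFn_eq_map]
  rfl

theorem card_upSteps_eq_of_inducedWord_eq {s s' : Fin m → Bool}
    (h : inducedWord k s = inducedWord k s') : #(upSteps s) = #(upSteps s') := by
  simpa [inducedWord_eq_ofFn _ _ rfl] using congrArg List.length h

theorem upLabel_orderEmbOfFin_eq_of_inducedWord_eq {s s' : Fin m → Bool}
    (hword : inducedWord k s = inducedWord k s') {N : ℕ} (h : #(upSteps s) = N)
    (h' : #(upSteps s') = N) (c : Fin N) :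
    upLabel k s ((upSteps s).orderEmbOfFin h c) =
      upLabel k s' ((upSteps s').orderEmbOfFin h' c) := by
  rw [inducedWord_eq_ofFn k s h, inducedWord_eq_ofFn k s' h'] at hword
  exact congrFun (List.ofFn_injective hword) c

theorem pathHeight_orderEmbOfFin_eq_of_upLabel_eq (hk : 1 ≤ k) {s s' : Fin m → Bool}
    (hs : ∀ i : Fin m, 0 ≤ pathHeight k s i) (hs' : ∀ i : Fin m, 0 ≤ pathHeight k s' i)
    {N : ℕ} (h : #(upSteps s) = N) (h' : #(upSteps s') = N)
    (hlabel : ∀ c, upLabel k s ((upSteps s).orderEmbOfFin h c) =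
      upLabel k s' ((upSteps s').orderEmbOfFin h' c)) (c : Fin N) :
    pathHeight k s ((upSteps s).orderEmbOfFin h c) =
      pathHeight k s' ((upSteps s').orderEmbOfFin h' c) := by
  set e := (upSteps s).orderEmbOfFin h
  set e' := (upSteps s').orderEmbOfFin h'
  induction hℓ : upLabel k s (e c) generalizing c with
  | zero =>
    rw [pathHeight_eq_zero_of_upLabel_eq_zero hk (hs _) hℓ,
      pathHeight_eq_zero_of_upLabel_eq_zero hk (hs' _) (hlabel c ▸ hℓ)]
  | succ ℓ ih =>
    have hup : ∀ c, s (e c) = true := fun c => mem_upSteps.mp (orderEmbOfFin_mem _ h c)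
    have hup' : ∀ c, s' (e' c) = true := fun c => mem_upSteps.mp (orderEmbOfFin_mem _ h' c)
    obtain ⟨j, hj, hjℓ⟩ := exists_upLabel_eq (hup c) hℓ
    obtain ⟨d, rfl⟩ : j ∈ Set.range e := by rw [range_orderEmbOfFin]; exact mem_upSteps.mpr hj
    rw [pathHeight_eq_of_upLabel_eq_succ hk hj (hs _) (hℓ.trans (congrArg (· + 1) hjℓ.symm)),
      pathHeight_eq_of_upLabel_eq_succ hk (hup' d) (hs' _)
        (by rw [← hlabel, ← hlabel, hℓ, hjℓ]),
      ih d hjℓ]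
    simp only [OrderEmbedding.lt_iff_lt]

theorem orderEmbOfFin_eq_of_pathHeight_eq (hk : 2 ≤ k) {s s' : Fin m → Bool} {N : ℕ}
    (h : #(upSteps s) = N) (h' : #(upSteps s') = N) {c : Fin N}
    (heq : pathHeight k s ((upSteps s).orderEmbOfFin h c) =
      pathHeight k s' ((upSteps s').orderEmbOfFin h' c)) :
    (upSteps s).orderEmbOfFin h c = (upSteps s').orderEmbOfFin h' c := by
  rw [pathHeight_orderEmbOfFin, pathHeight_orderEmbOfFin] at heq
  have hk' : (k : ℤ) - 1 ≠ 0 := by omega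
  have : (((upSteps s).orderEmbOfFin h c : ℕ) : ℤ) = ((upSteps s').orderEmbOfFin h' c : ℕ) :=
    mul_left_cancel₀ hk' (by linarith)
  exact Fin.ext (by exact_mod_cast this)

theorem eq_of_orderEmbOfFin_eq {s s' : Fin m → Bool} {N : ℕ} (h : #(upSteps s) = N)
    (h' : #(upSteps s') = N)
    (heq : ∀ c, (upSteps s).orderEmbOfFin h c = (upSteps s').orderEmbOfFin h' c) : s = s' := by
  have hup : upSteps s = upSteps s' := by
    rw [← image_orderEmbOfFin_univ _ h, ← image_orderEmbOfFin_univ _ h',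
      show ⇑((upSteps s).orderEmbOfFin h) = (upSteps s').orderEmbOfFin h' from funext heq]
  funext i
  rw [Bool.eq_iff_iff, ← mem_upSteps, ← mem_upSteps, hup]

theorem eq_of_inducedWord_eq (hk : 2 ≤ k) {s s' : Fin m → Bool}
    (hs : ∀ i : Fin m, 0 ≤ pathHeight k s i) (hs' : ∀ i : Fin m, 0 ≤ pathHeight k s' i)
    (hword : inducedWord k s = inducedWord k s') : s = s' := by
  have hN := card_upSteps_eq_of_inducedWord_eq hword
  refine eq_of_orderEmbOfFin_eq rfl hN.symm fun c => orderEmbOfFin_eq_of_pathHeight_eq hk _ _ ?_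
  exact pathHeight_orderEmbOfFin_eq_of_upLabel_eq (by omega) hs hs' _ _
    (upLabel_orderEmbOfFin_eq_of_inducedWord_eq hword _ _) c

end Path

theorem stmt16_general (k n : ℕ) (hk : 2 ≤ k) (s s' : Fin (k * n) → Bool)
    (hs_pos : ∀ i : ℕ, i ≤ k * n → 0 ≤ pathHeight k s i)
    (hs'_pos : ∀ i : ℕ, i ≤ k * n → 0 ≤ pathHeight k s' i)
    (hword : inducedWord k s = inducedWord k s') :
    s = s' :=
  eq_of_inducedWord_eq hk (fun i => hs_pos i i.isLt.le) (fun i => hs'_pos i i.isLt.le) hword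

/-- The map sending each `k`-Catalan path of order `n` (a path with `(k-1)n` up
steps `(1,1)` and `n` down steps `(1,1-k)` that never goes below the x-axis) to its
induced short `k`-Catalan–Spitzer permutation is injective. -/
theorem stmt16 (k n : ℕ) (hk : 2 ≤ k) (s s' : Fin (k * n) → Bool)
    (hs_down : (Finset.univ.filter (fun i => s i = false)).card = n)
    (hs'_down : (Finset.univ.filter (fun i => s' i = false)).card = n)
    (hs_pos : ∀ i : ℕ, i ≤ k * n → 0 ≤ pathHeight k s i)
    (hs'_pos : ∀ i : ℕ, i ≤ k * n → 0 ≤ pathHeight k s' i)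
    (hword : inducedWord k s = inducedWord k s') :
    s = s' :=
  stmt16_general k n hk s s' hs_pos hs'_pos hword
end
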